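/- arXiv:2501.16250 — 4 statements merged into one kernel-verified Lean document; each statement's English description precedes it below -/
import Mathlib

section
/- (Negative drift theorem.) Let (X_t)_{t ∈ ℕ} be a random process over ℝ with X_0 ≤ 0, let b > 0, and let T = inf{t ∈ ℕ : X_t ≥ b}. Suppose there are a ≤ 0, c ∈ (0, b), and ε < 0 such that for all t ∈ ℕ: (a) E[X_{t+1} − X_t | X_t]·1{X_t ≥ a} ≤ ε·1{X_t ≥ a}; (b) |X_t − X_{t+1}|·1{X_t ≥ a} < c; and (c) X_{t+1}·1{X_t < a} ≤ 0. Then for all t ∈ ℕ, Pr[T ≤ t] ≤ t^2·exp(−b·|ε|/(2c^2)). -/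
open MeasureTheory ProbabilityTheory

private lemma nd_cosh_bound {u : ℝ} (hu : 0 ≤ u) : Real.cosh u - u * Real.sinh u ≤ 1 := by
  set f : ℝ → ℝ := fun x => Real.cosh x - x * Real.sinh x with hf
  have hderiv : ∀ x : ℝ, HasDerivAt f (-(x * Real.cosh x)) x := by
    intro x
    have h1 : HasDerivAt (fun x : ℝ => x * Real.sinh x)
        (1 * Real.sinh x + x * Real.cosh x) x :=
      (hasDerivAt_id x).mul (Real.hasDerivAt_sinh x)
    have := (Real.hasDerivAt_cosh x).sub h1
    exact this.congr_deriv (by ring)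
  have hanti : AntitoneOn f (Set.Ici (0:ℝ)) := by
    apply antitoneOn_of_deriv_nonpos (convex_Ici 0)
    · exact Continuous.continuousOn (by continuity)
    · intro x _; exact (hderiv x).differentiableAt.differentiableWithinAt
    · intro x hx
      rw [(hderiv x).deriv]
      have hx' : 0 < x := by simpa using hx
      have := Real.cosh_pos x
      nlinarith
  have := hanti (Set.self_mem_Ici) hu hu
  simpa [f] using this

private lemma nd_chord {u y : ℝ} (hy : |y| ≤ 1) :
    Real.exp (u * y) ≤ Real.cosh u + Real.sinh u * y := by
  have hy1 : -1 ≤ y := neg_le_of_abs_le hy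
  have hy2 : y ≤ 1 := le_of_abs_le hy
  have h1 : (0:ℝ) ≤ (1 - y) / 2 := by linarith
  have h2 : (0:ℝ) ≤ (1 + y) / 2 := by linarith
  have hsum : (1 - y) / 2 + (1 + y) / 2 = 1 := by ring
  have hconv := convexOn_exp.2 (Set.mem_univ (-u)) (Set.mem_univ u) h1 h2 hsum
  simp only [smul_eq_mul] at hconv
  have harg : (1 - y) / 2 * (-u) + (1 + y) / 2 * u = u * y := by ring
  rw [harg] at hconv
  calc Real.exp (u * y) ≤ (1 - y)/2 * Real.exp (-u) + (1 + y)/2 * Real.exp u := hconv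
    _ = Real.cosh u + Real.sinh u * y := by
        rw [Real.cosh_eq, Real.sinh_eq]; ring

set_option maxHeartbeats 1600000 in
/-- negative drift theorem.  Let `(X_t)` be a real-valued random
process with `X_0 ≤ 0`, let `b > 0` and `T = inf {t | X_t ≥ b}`.  If there are
`a ≤ 0`, `c ∈ (0, b)` and `ε < 0` such that almost surely, for all `t`:
(a) `E[X_{t+1} - X_t | X_t] ≤ ε` on `{X_t ≥ a}`;
(b) `|X_t - X_{t+1}| < c` on `{X_t ≥ a}`; and
(c) `X_{t+1} ≤ 0` on `{X_t < a}`;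
then for all `t`, `Pr[T ≤ t] ≤ t² exp (-b |ε| / (2 c²))`. -/
theorem negative_drift_theorem
    {Ω : Type*} [MeasurableSpace Ω] (P : Measure Ω) [IsProbabilityMeasure P]
    (X : ℕ → Ω → ℝ) (hXmeas : ∀ t, Measurable (X t))
    (hX0 : ∀ᵐ ω ∂P, X 0 ω ≤ 0)
    (b : ℝ) (hb : 0 < b)
    (T : Ω → ℕ∞)
    (hT : ∀ ω, T ω = sInf {m : ℕ∞ | ∃ t : ℕ, (t : ℕ∞) = m ∧ X t ω ≥ b})
    (a : ℝ) (ha : a ≤ 0) (c : ℝ) (hc : c ∈ Set.Ioo 0 b) (ε : ℝ) (hε : ε < 0)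
    (hA : ∀ t : ℕ, ∀ᵐ ω ∂P, a ≤ X t ω →
      MeasureTheory.condExp (MeasurableSpace.comap (X t) inferInstance) P
        (fun ω' => X (t + 1) ω' - X t ω') ω ≤ ε)
    (hB : ∀ t : ℕ, ∀ᵐ ω ∂P, a ≤ X t ω → |X t ω - X (t + 1) ω| < c)
    (hC : ∀ t : ℕ, ∀ᵐ ω ∂P, X t ω < a → X (t + 1) ω ≤ 0) :
    ∀ t : ℕ, (P {ω | T ω ≤ (t : ℕ∞)}).toReal ≤
      (t : ℝ) ^ 2 * Real.exp (-(b * |ε|) / (2 * c ^ 2)) := by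
  obtain ⟨hc0, hcb⟩ := hc
  have hεabs : |ε| = -ε := abs_of_neg hε
  obtain ⟨l, hl_def⟩ : ∃ l : ℝ, l = -ε / c ^ 2 := ⟨_, rfl⟩
  have hl : 0 < l := by rw [hl_def]; exact div_pos (by linarith) (by positivity)
  obtain ⟨u, hu_def⟩ : ∃ u : ℝ, u = l * c := ⟨_, rfl⟩
  have hu : 0 < u := by rw [hu_def]; exact mul_pos hl hc0
  obtain ⟨W, hW_def⟩ : ∃ W : ℕ → Ω → ℝ, W = fun t ω => Real.exp (l * X t ω) := ⟨_, rfl⟩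
  have hWeval : ∀ (t : ℕ) (ω : Ω), W t ω = Real.exp (l * X t ω) := by
    intro t ω; rw [hW_def]
  have hWmeas : ∀ t, Measurable (W t) := by
    rw [hW_def]; exact fun t => Real.measurable_exp.comp ((hXmeas t).const_mul l)
  have hWpos : ∀ t ω, 0 < W t ω := fun t ω => by rw [hWeval]; exact Real.exp_pos _
  -- a.e. trajectory bound
  have hae_traj : ∀ᵐ ω ∂P, ∀ t : ℕ, X t ω ≤ c * t := by
    have h1 : ∀ᵐ ω ∂P, X 0 ω ≤ 0 ∧ ∀ t : ℕ,
        (a ≤ X t ω → |X t ω - X (t+1) ω| < c) ∧ (X t ω < a → X (t+1) ω ≤ 0) := by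
      refine hX0.and ?_
      rw [MeasureTheory.ae_all_iff]
      intro t; exact (hB t).and (hC t)
    filter_upwards [h1] with ω hω
    obtain ⟨h0, hstep⟩ := hω
    intro t
    induction t with
    | zero => simpa using h0
    | succ n ih =>
      rcases le_or_gt a (X n ω) with hcase | hcase
      · have h2 := (hstep n).1 hcase
        have h3 : X n ω - X (n+1) ω > -c := (abs_lt.mp h2).1
        push_cast
        push_cast at ih
        linarith
      · have h2 := (hstep n).2 hcase
        have h3 : (0:ℝ) ≤ c * ((n:ℝ)+1) := by positivity
        push_cast
        linarith
  -- integrability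
  have hWint : ∀ t : ℕ, Integrable (W t) P := by
    intro t
    refine Integrable.mono' (integrable_const (Real.exp (l * (c * t))))
      (hWmeas t).aestronglyMeasurable ?_
    filter_upwards [hae_traj] with ω hω
    rw [Real.norm_eq_abs, abs_of_pos (hWpos t ω), hWeval]
    exact Real.exp_le_exp.mpr (mul_le_mul_of_nonneg_left (hω t) hl.le)
  have hWnonneg : ∀ t : ℕ, 0 ≤ᵐ[P] W t := fun t =>
    Filter.Eventually.of_forall (fun ω => (hWpos t ω).le)
  have hWint_nonneg : ∀ t : ℕ, 0 ≤ ∫ ω, W t ω ∂P := fun t =>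
    integral_nonneg fun ω => (hWpos t ω).le
  -- main recursion
  have hrec : ∀ t : ℕ, ∫ ω, W (t+1) ω ∂P ≤ (∫ ω, W t ω ∂P) + 1 := by
    intro t
    have hm : MeasurableSpace.comap (X t) inferInstance ≤ ‹MeasurableSpace Ω› :=
      (hXmeas t).comap_le
    set S : Set Ω := X t ⁻¹' Set.Ici a with hS_def
    have hSm : MeasurableSet[MeasurableSpace.comap (X t) inferInstance] S :=
      ⟨Set.Ici a, measurableSet_Ici, rfl⟩
    have hS : MeasurableSet S := hm _ hSm
    have hmemS : ∀ ω, ω ∈ S ↔ a ≤ X t ω := fun ω => Iff.rfl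
    -- part over Sᶜ
    have hcompl : ∫ ω in Sᶜ, W (t+1) ω ∂P ≤ 1 := by
      have hle : ∀ᵐ ω ∂(P.restrict Sᶜ), W (t+1) ω ≤ 1 := by
        filter_upwards [ae_restrict_of_ae (hC t), ae_restrict_mem hS.compl] with ω h1 h2
        have hXa : X t ω < a := not_le.mp h2
        have h3 := h1 hXa
        have h4 : l * X (t+1) ω ≤ 0 := mul_nonpos_of_nonneg_of_nonpos hl.le h3
        calc W (t+1) ω = Real.exp (l * X (t+1) ω) := hWeval _ _
          _ ≤ Real.exp 0 := Real.exp_le_exp.mpr h4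
          _ = 1 := Real.exp_zero
      calc ∫ ω in Sᶜ, W (t+1) ω ∂P ≤ ∫ _ω in Sᶜ, (1:ℝ) ∂P :=
            integral_mono_ae ((hWint (t+1)).restrict) (integrable_const 1) hle
        _ = (P Sᶜ).toReal := by simp; rfl
        _ ≤ 1 := by
            have h5 : P Sᶜ ≤ 1 := prob_le_one
            calc (P Sᶜ).toReal ≤ (1 : ENNReal).toReal :=
                  ENNReal.toReal_mono ENNReal.one_ne_top h5
              _ = 1 := by simp
    -- part over S
    have hmain : ∫ ω in S, W (t+1) ω ∂P ≤ ∫ ω, W t ω ∂P := by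
      by_cases hInt : Integrable (fun ω' => X (t + 1) ω' - X t ω') P
      · -- integrable case
        set g : Ω → ℝ := S.indicator (W t) with hg_def
        have hWtm : StronglyMeasurable[MeasurableSpace.comap (X t) inferInstance] (W t) := by
          have hXtm : Measurable[MeasurableSpace.comap (X t) inferInstance] (X t) :=
            measurable_iff_comap_le.mpr le_rfl
          rw [hW_def]
          exact (Real.measurable_exp.comp (hXtm.const_mul l)).stronglyMeasurable
        have hgm : StronglyMeasurable[MeasurableSpace.comap (X t) inferInstance] g :=
          hWtm.indicator hSm
        have hgae : AEStronglyMeasurable g P := (hgm.mono hm).aestronglyMeasurable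
        have hg_nonneg : ∀ ω, 0 ≤ g ω := fun ω =>
          Set.indicator_nonneg (fun ω' _ => (hWpos t ω').le) ω
        have hg_le : ∀ ω, g ω ≤ W t ω := fun ω =>
          Set.indicator_le_self' (fun x _ => (hWpos t x).le) ω
        have hg_bd : ∀ᵐ ω ∂P, ‖g ω‖ ≤ Real.exp (l * (c * t)) := by
          filter_upwards [hae_traj] with ω hω
          rw [Real.norm_eq_abs, abs_of_nonneg (hg_nonneg ω)]
          refine (hg_le ω).trans ?_
          rw [hWeval]
          exact Real.exp_le_exp.mpr (mul_le_mul_of_nonneg_left (hω t) hl.le)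
        have hg_int : Integrable g P :=
          Integrable.mono' (integrable_const _) hgae hg_bd
        have hg_int_nonneg : 0 ≤ ∫ ω, g ω ∂P := integral_nonneg hg_nonneg
        have hgD_int : Integrable (fun ω => g ω * (X (t + 1) ω - X t ω)) P :=
          hInt.bdd_mul hgae hg_bd
        have hpull :
            P[(fun ω => g ω * (X (t + 1) ω - X t ω)) |
                MeasurableSpace.comap (X t) inferInstance]
              =ᵐ[P] fun ω => g ω *
                (P[(fun ω' => X (t + 1) ω' - X t ω') |
                    MeasurableSpace.comap (X t) inferInstance]) ω :=
          condExp_stronglyMeasurable_mul_of_bound hm hgm hInt _ hg_bd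
        have hkey1 : ∫ ω, g ω * (X (t + 1) ω - X t ω) ∂P ≤ ε * ∫ ω, g ω ∂P := by
          have e1 : ∫ ω, g ω * (X (t + 1) ω - X t ω) ∂P
              = ∫ ω, (P[(fun ω => g ω * (X (t + 1) ω - X t ω)) |
                  MeasurableSpace.comap (X t) inferInstance]) ω ∂P :=
            (integral_condExp hm).symm
          rw [e1, integral_congr_ae hpull]
          have hce_int : Integrable (fun ω => g ω *
              (P[(fun ω' => X (t + 1) ω' - X t ω') |
                  MeasurableSpace.comap (X t) inferInstance]) ω) P :=
            integrable_condExp.bdd_mul hgae hg_bd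
          have hεg_int : Integrable (fun ω => ε * g ω) P := hg_int.const_mul ε
          have hmono : ∀ᵐ ω ∂P, g ω *
              (P[(fun ω' => X (t + 1) ω' - X t ω') |
                  MeasurableSpace.comap (X t) inferInstance]) ω ≤ ε * g ω := by
            filter_upwards [hA t] with ω hω
            by_cases hωS : ω ∈ S
            · have h1 := hω ((hmemS ω).mp hωS)
              have h2 : 0 ≤ g ω := hg_nonneg ω
              calc g ω * _ ≤ g ω * ε := mul_le_mul_of_nonneg_left h1 h2
                _ = ε * g ω := mul_comm _ _
            · rw [hg_def, Set.indicator_of_notMem hωS]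
              simp
          calc ∫ ω, g ω * _ ∂P ≤ ∫ ω, ε * g ω ∂P :=
                integral_mono_ae hce_int hεg_int hmono
            _ = ε * ∫ ω, g ω ∂P := integral_const_mul ε g
        -- chord bound a.e. on S
        have hWD_int : Integrable (fun ω => W t ω * (X (t + 1) ω - X t ω)) P := by
          refine hInt.bdd_mul (c := Real.exp (l * (c * t)))
            (hWmeas t).aestronglyMeasurable ?_
          filter_upwards [hae_traj] with ω hω
          rw [Real.norm_eq_abs, abs_of_pos (hWpos t ω), hWeval]
          exact Real.exp_le_exp.mpr (mul_le_mul_of_nonneg_left (hω t) hl.le)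
        have hrhs_int : Integrable (fun ω => W t ω *
            (Real.cosh u + Real.sinh u / c * (X (t + 1) ω - X t ω))) P := by
          have heq : (fun ω => W t ω *
              (Real.cosh u + Real.sinh u / c * (X (t + 1) ω - X t ω)))
              = fun ω => Real.cosh u * W t ω
                + Real.sinh u / c * (W t ω * (X (t + 1) ω - X t ω)) := by
            funext ω; ring
          rw [heq]
          exact ((hWint t).const_mul _).add (hWD_int.const_mul _)
        have hchord : ∀ᵐ ω ∂(P.restrict S), W (t+1) ω ≤ W t ω *
            (Real.cosh u + Real.sinh u / c * (X (t + 1) ω - X t ω)) := by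
          filter_upwards [ae_restrict_of_ae (hB t), ae_restrict_mem hS] with ω h1 h2
          have hXa : a ≤ X t ω := h2
          have habs : |X t ω - X (t+1) ω| < c := h1 hXa
          have habs' : |(X (t+1) ω - X t ω) / c| ≤ 1 := by
            rw [abs_div, abs_of_pos hc0, div_le_one hc0, abs_sub_comm]
            exact habs.le
          have hch := nd_chord (u := u) habs'
          have hexp : W (t+1) ω = W t ω * Real.exp (u * ((X (t+1) ω - X t ω) / c)) := by
            rw [hWeval, hWeval, ← Real.exp_add]
            congr 1
            rw [hu_def]
            field_simp
            ring
          rw [hexp]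
          have h3 := mul_le_mul_of_nonneg_left hch (hWpos t ω).le
          calc W t ω * Real.exp (u * ((X (t+1) ω - X t ω) / c))
              ≤ W t ω * (Real.cosh u + Real.sinh u * ((X (t+1) ω - X t ω) / c)) := h3
            _ = W t ω * (Real.cosh u + Real.sinh u / c * (X (t + 1) ω - X t ω)) := by
                ring
        have h2 : ∫ ω in S, W (t+1) ω ∂P ≤ ∫ ω in S, W t ω *
            (Real.cosh u + Real.sinh u / c * (X (t + 1) ω - X t ω)) ∂P :=
          integral_mono_ae ((hWint (t+1)).restrict) (hrhs_int.restrict) hchord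
        have h3 : ∫ ω in S, W t ω *
            (Real.cosh u + Real.sinh u / c * (X (t + 1) ω - X t ω)) ∂P
            = Real.cosh u * ∫ ω, g ω ∂P
              + Real.sinh u / c * ∫ ω, g ω * (X (t + 1) ω - X t ω) ∂P := by
          rw [← integral_indicator hS]
          have heq : (fun ω => S.indicator (fun ω' => W t ω' *
              (Real.cosh u + Real.sinh u / c * (X (t + 1) ω' - X t ω'))) ω)
              = fun ω => Real.cosh u * g ω
                + Real.sinh u / c * (g ω * (X (t + 1) ω - X t ω)) := by
            funext ω
            by_cases hωS : ω ∈ S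
            · rw [Set.indicator_of_mem hωS, hg_def, Set.indicator_of_mem hωS]
              ring
            · rw [Set.indicator_of_notMem hωS, hg_def, Set.indicator_of_notMem hωS]
              ring
          rw [heq, integral_add ((hg_int.const_mul _)) ((hgD_int.const_mul _)),
            integral_const_mul, integral_const_mul]
        have hsc : 0 ≤ Real.sinh u / c := div_nonneg (Real.sinh_nonneg_iff.mpr hu.le) hc0.le
        have h4 : Real.cosh u * ∫ ω, g ω ∂P
              + Real.sinh u / c * ∫ ω, g ω * (X (t + 1) ω - X t ω) ∂P
            ≤ Real.cosh u * ∫ ω, g ω ∂P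
              + Real.sinh u / c * (ε * ∫ ω, g ω ∂P) :=
          add_le_add_right (mul_le_mul_of_nonneg_left hkey1 hsc) _
        have hεu : ε = -(u * c) := by
          rw [hu_def, hl_def]
          field_simp
        have h5 : Real.cosh u * ∫ ω, g ω ∂P + Real.sinh u / c * (ε * ∫ ω, g ω ∂P)
            = (Real.cosh u - u * Real.sinh u) * ∫ ω, g ω ∂P := by
          rw [hεu]
          field_simp
          ring
        have h6 : (Real.cosh u - u * Real.sinh u) * ∫ ω, g ω ∂P ≤ ∫ ω, g ω ∂P := by
          nlinarith [nd_cosh_bound hu.le, hg_int_nonneg]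
        have h7 : ∫ ω, g ω ∂P ≤ ∫ ω, W t ω ∂P :=
          integral_mono_ae hg_int (hWint t) (Filter.Eventually.of_forall hg_le)
        calc ∫ ω in S, W (t+1) ω ∂P ≤ _ := h2
          _ = _ := h3
          _ ≤ _ := h4
          _ = _ := h5
          _ ≤ ∫ ω, g ω ∂P := h6
          _ ≤ ∫ ω, W t ω ∂P := h7
      · -- non-integrable case: S is null
        have h0 : (MeasureTheory.condExp (MeasurableSpace.comap (X t) inferInstance) P
            (fun ω' => X (t + 1) ω' - X t ω')) = 0 := condExp_of_not_integrable hInt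
        have hnull : P S = 0 := by
          rw [measure_eq_zero_iff_ae_notMem]
          filter_upwards [hA t] with ω hω
          intro hmem
          have h1 := hω ((hmemS ω).mp hmem)
          rw [h0] at h1
          simp at h1
          linarith
        rw [Measure.restrict_eq_zero.mpr hnull, integral_zero_measure]
        exact hWint_nonneg t
    calc ∫ ω, W (t+1) ω ∂P
        = (∫ ω in S, W (t+1) ω ∂P) + ∫ ω in Sᶜ, W (t+1) ω ∂P :=
          (integral_add_compl hS (hWint (t+1))).symm
      _ ≤ (∫ ω, W t ω ∂P) + 1 := add_le_add hmain hcompl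
  -- bound on E[W t]
  have hWsum : ∀ t : ℕ, ∫ ω, W t ω ∂P ≤ (t : ℝ) + 1 := by
    intro t
    induction t with
    | zero =>
      have h1 : ∀ᵐ ω ∂P, W 0 ω ≤ 1 := by
        filter_upwards [hX0] with ω hω
        have h2 : l * X 0 ω ≤ 0 := mul_nonpos_of_nonneg_of_nonpos hl.le hω
        calc W 0 ω = Real.exp (l * X 0 ω) := hWeval _ _
          _ ≤ Real.exp 0 := Real.exp_le_exp.mpr h2
          _ = 1 := Real.exp_zero
      have h2 : ∫ ω, W 0 ω ∂P ≤ ∫ _ω, (1:ℝ) ∂P :=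
        integral_mono_ae (hWint 0) (integrable_const 1) h1
      simpa using h2
    | succ n ih =>
      calc ∫ ω, W (n+1) ω ∂P ≤ (∫ ω, W n ω ∂P) + 1 := hrec n
        _ ≤ ((n:ℝ) + 1) + 1 := by linarith
        _ = ((n:ℕ)+1 : ℕ) + 1 := by push_cast; ring
  -- Markov bound
  have hMarkov : ∀ s : ℕ, (P {ω | b ≤ X s ω}).toReal
      ≤ ((s:ℝ) + 1) * Real.exp (-(l * b)) := by
    intro s
    have hA_meas : MeasurableSet {ω | b ≤ X s ω} :=
      measurableSet_le measurable_const (hXmeas s)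
    have h1 : Real.exp (l * b) * (P {ω | b ≤ X s ω}).toReal ≤ ∫ ω, W s ω ∂P := by
      have hae : ∀ᵐ ω ∂(P.restrict {ω | b ≤ X s ω}), Real.exp (l * b) ≤ W s ω := by
        filter_upwards [ae_restrict_mem hA_meas] with ω hω
        rw [hWeval]
        exact Real.exp_le_exp.mpr (mul_le_mul_of_nonneg_left hω hl.le)
      calc Real.exp (l * b) * (P {ω | b ≤ X s ω}).toReal
          = ∫ _ω in {ω | b ≤ X s ω}, Real.exp (l * b) ∂P := by
            rw [setIntegral_const, smul_eq_mul, Measure.real]; ring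
        _ ≤ ∫ ω in {ω | b ≤ X s ω}, W s ω ∂P :=
            integral_mono_ae (integrable_const _) ((hWint s).restrict) hae
        _ ≤ ∫ ω, W s ω ∂P := setIntegral_le_integral (hWint s) (hWnonneg s)
    have h2 : Real.exp (l * b) * (P {ω | b ≤ X s ω}).toReal ≤ (s:ℝ) + 1 :=
      h1.trans (hWsum s)
    have hep : (0:ℝ) < Real.exp (l * b) := Real.exp_pos _
    calc (P {ω | b ≤ X s ω}).toReal
        = (Real.exp (l * b) * (P {ω | b ≤ X s ω}).toReal) * (Real.exp (l * b))⁻¹ := by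
          field_simp
      _ ≤ ((s:ℝ) + 1) * (Real.exp (l * b))⁻¹ := by
          apply mul_le_mul_of_nonneg_right h2 (by positivity)
      _ = ((s:ℝ) + 1) * Real.exp (-(l * b)) := by rw [Real.exp_neg]
  -- null events at times 0 and 1
  have hnull0 : P {ω | b ≤ X 0 ω} = 0 := by
    rw [measure_eq_zero_iff_ae_notMem]
    filter_upwards [hX0] with ω hω
    simp only [Set.mem_setOf_eq, not_le]
    linarith
  have hnull1 : P {ω | b ≤ X 1 ω} = 0 := by
    rw [measure_eq_zero_iff_ae_notMem]
    filter_upwards [hX0, hB 0, hC 0] with ω h0 h1 h2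
    simp only [Set.mem_setOf_eq, not_le]
    rcases le_or_gt a (X 0 ω) with hca | hca
    · have h3 := h1 hca
      have h4 : X 0 ω - X 1 ω > -c := (abs_lt.mp h3).1
      linarith
    · have h3 := h2 hca
      linarith
  -- inclusion of the stopping event in a finite union
  have hTsub : ∀ t : ℕ, {ω | T ω ≤ (t:ℕ∞)}
      ⊆ ⋃ s ∈ Finset.range (t+1), {ω | b ≤ X s ω} := by
    intro t ω hω
    simp only [Set.mem_setOf_eq, hT ω] at hω
    by_contra hcon
    simp only [Set.mem_iUnion, Finset.mem_range, Set.mem_setOf_eq, not_exists,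
      not_le, exists_prop, not_and] at hcon
    have hlb : ((t:ℕ∞) + 1) ≤ sInf {m : ℕ∞ | ∃ s : ℕ, (s:ℕ∞) = m ∧ X s ω ≥ b} := by
      apply le_sInf
      rintro m ⟨s, rfl, hs⟩
      have hst : t + 1 ≤ s := by
        by_contra hlt
        push_neg at hlt
        exact absurd hs (not_le.mpr (hcon s hlt))
      exact_mod_cast hst
    have hlt : (t:ℕ∞) < (t:ℕ∞) + 1 := by
      have : ((t:ℕ∞)) < ((t+1 : ℕ) : ℕ∞) := by exact_mod_cast Nat.lt_succ_self t
      simpa using this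
    exact absurd (hlb.trans hω) (not_le.mpr hlt)
  -- final assembly
  intro t
  have hBexp0 : (0:ℝ) < Real.exp (-(b * |ε|) / (2 * c ^ 2)) := Real.exp_pos _
  have hBexp1 : Real.exp (-(b * |ε|) / (2 * c ^ 2)) ≤ 1 := by
    apply Real.exp_le_one_iff.mpr (by
      apply div_nonpos_of_nonpos_of_nonneg
      · nlinarith [abs_nonneg ε]
      · positivity)
  have hlb_eq : Real.exp (-(l * b)) = (Real.exp (-(b * |ε|) / (2 * c ^ 2)))^2 := by
    rw [sq, ← Real.exp_add]
    congr 1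
    rw [hεabs, hl_def]
    field_simp
    ring
  have hmeasB : ∀ s : ℕ, MeasurableSet {ω | b ≤ X s ω} := fun s =>
    measurableSet_le measurable_const (hXmeas s)
  by_cases ht2 : t < 2
  · have hsum0 : ∑ s ∈ Finset.range (t+1), P {ω | b ≤ X s ω} = 0 := by
      interval_cases t
      · simp [hnull0]
      · rw [Finset.sum_range_succ, Finset.sum_range_one, hnull0, hnull1]
        simp
    have hle0 : P {ω | T ω ≤ (t:ℕ∞)} ≤ 0 := by
      calc P {ω | T ω ≤ (t:ℕ∞)} ≤ ∑ s ∈ Finset.range (t+1), P {ω | b ≤ X s ω} :=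
            le_trans (measure_mono (hTsub t)) (measure_biUnion_finset_le _ _)
        _ = 0 := hsum0
    rw [le_zero_iff.mp hle0]
    positivity
  · push_neg at ht2
    have hle1 : P {ω | T ω ≤ (t:ℕ∞)} ≤ ∑ s ∈ Finset.range (t+1), P {ω | b ≤ X s ω} :=
      le_trans (measure_mono (hTsub t)) (measure_biUnion_finset_le _ _)
    have hfin : ∀ s ∈ Finset.range (t+1), P {ω | b ≤ X s ω} ≠ ⊤ := fun s _ =>
      measure_ne_top P _
    have hle2 : (P {ω | T ω ≤ (t:ℕ∞)}).toReal
        ≤ ∑ s ∈ Finset.range (t+1), (P {ω | b ≤ X s ω}).toReal := by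
      rw [← ENNReal.toReal_sum hfin]
      exact ENNReal.toReal_mono (ENNReal.sum_ne_top.mpr hfin) hle1
    have hsplit : ∑ s ∈ Finset.range (t+1), (P {ω | b ≤ X s ω}).toReal
        = (P {ω | b ≤ X 0 ω}).toReal + (P {ω | b ≤ X 1 ω}).toReal
          + ∑ s ∈ Finset.Ico 2 (t+1), (P {ω | b ≤ X s ω}).toReal := by
      rw [Finset.range_eq_Ico,
        ← Finset.sum_Ico_consecutive (fun s => (P {ω | b ≤ X s ω}).toReal)
          (by omega : 0 ≤ 2) (by omega : 2 ≤ t+1)]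
      congr 1
      have h1 : Finset.Ico 0 2 = Finset.range 2 := by rw [Finset.range_eq_Ico]
      rw [h1, Finset.sum_range_succ, Finset.sum_range_one]
    have hIco : ∑ s ∈ Finset.Ico 2 (t+1), (P {ω | b ≤ X s ω}).toReal
        ≤ ((t:ℝ) - 1) * (((t:ℝ) + 1) * Real.exp (-(l * b))) := by
      have hterm : ∀ s ∈ Finset.Ico 2 (t+1),
          (P {ω | b ≤ X s ω}).toReal ≤ ((t:ℝ) + 1) * Real.exp (-(l * b)) := by
        intro s hs
        have hst : s ≤ t := by
          rw [Finset.mem_Ico] at hs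
          omega
        refine (hMarkov s).trans ?_
        have : ((s:ℝ) + 1) ≤ ((t:ℝ) + 1) := by
          have : (s:ℝ) ≤ (t:ℝ) := by exact_mod_cast hst
          linarith
        exact mul_le_mul_of_nonneg_right this (Real.exp_pos _).le
      calc ∑ s ∈ Finset.Ico 2 (t+1), (P {ω | b ≤ X s ω}).toReal
          ≤ ∑ _s ∈ Finset.Ico 2 (t+1), ((t:ℝ) + 1) * Real.exp (-(l * b)) :=
            Finset.sum_le_sum hterm
        _ = ((Finset.Ico 2 (t+1)).card : ℝ) * (((t:ℝ) + 1) * Real.exp (-(l * b))) := by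
            rw [Finset.sum_const, nsmul_eq_mul]
        _ = ((t:ℝ) - 1) * (((t:ℝ) + 1) * Real.exp (-(l * b))) := by
            rw [Nat.card_Ico]
            congr 1
            have : t + 1 - 2 = t - 1 := by omega
            rw [this, Nat.cast_sub (by omega : 1 ≤ t)]
            simp
    rw [hnull0, hnull1] at hsplit
    simp only [ENNReal.toReal_zero, zero_add] at hsplit
    have htR : (2:ℝ) ≤ (t:ℝ) := by exact_mod_cast ht2
    calc (P {ω | T ω ≤ (t:ℕ∞)}).toReal
        ≤ ∑ s ∈ Finset.range (t+1), (P {ω | b ≤ X s ω}).toReal := hle2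
      _ = ∑ s ∈ Finset.Ico 2 (t+1), (P {ω | b ≤ X s ω}).toReal := hsplit
      _ ≤ ((t:ℝ) - 1) * (((t:ℝ) + 1) * Real.exp (-(l * b))) := hIco
      _ = ((t:ℝ)^2 - 1) * (Real.exp (-(b * |ε|) / (2 * c ^ 2)))^2 := by
          rw [hlb_eq]; ring
      _ ≤ (t:ℝ)^2 * (Real.exp (-(b * |ε|) / (2 * c ^ 2)))^2 := by
          have h9 : ((t:ℝ)^2 - 1) ≤ (t:ℝ)^2 := by linarith
          exact mul_le_mul_of_nonneg_right h9 (sq_nonneg _)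
      _ ≤ (t:ℝ)^2 * Real.exp (-(b * |ε|) / (2 * c ^ 2)) := by
          have h9 : (Real.exp (-(b * |ε|) / (2 * c ^ 2)))^2
              ≤ Real.exp (-(b * |ε|) / (2 * c ^ 2)) := by nlinarith [hBexp0, hBexp1]
          exact mul_le_mul_of_nonneg_left h9 (sq_nonneg _)
end

section
/- (Genetic drift bound for the cGA.) Consider the cGA with well-behaved hypothetical population size μ > 0 maximizing a fitness function f: {0,1}^n → ℝ that weakly prefers 1s over 0s at position i ∈ [n]. Then for all γ > 0 and all T ∈ ℕ, Pr[∀ t ∈ [0..T] : p_i^(t) > 1/2 − γ] ≥ 1 − 2·exp(−γ^2·μ^2/(2T)). -/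
/-- The LeadingOnes fitness function: the length of the longest all-ones prefix. -/
noncomputable def leadingOnes {n : ℕ} (x : Fin n → Bool) : ℝ :=
  (((Finset.univ : Finset (Fin n)).filter (fun i => ∀ j ≤ i, x j = true)).card : ℝ)

/-- Capping a frequency value into the interval `[1/n, 1 - 1/n]`. -/
noncomputable def capFreq (n : ℕ) (v : ℝ) : ℝ :=
  max (1 / (n : ℝ)) (min (1 - 1 / (n : ℝ)) v)

/-- `μ` is a well-behaved hypothetical population size: it is positive and
`1/2 - 1/n` is an integer multiple of the step size `1/μ`. -/
def WellBehaved (n : ℕ) (μ : ℝ) : Prop :=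
  0 < μ ∧ ∃ k : ℕ, (1 / 2 : ℝ) - 1 / (n : ℝ) = (k : ℝ) / μ

/-- A run of the compact genetic algorithm (cGA) with hypothetical population size `μ`
maximizing the fitness function `f` on bit strings of length `n`, started from the
initial frequency vector `p0`.  The randomness is realized by i.i.d. uniform-`[0,1]`
random variables `u k t i` (one for each of the two samples `k : Fin 2`, each
iteration `t : ℕ` and each position `i : Fin n`); bit `i` of sample `k` in iteration
`t` is `1` iff `u k t i < (p t) i`.  Writing `y¹, y²` for the better and the worse of
the two samples (ties resolved in favour of the first sample), each frequency is
updated by `(1/μ) * (y¹ᵢ - y²ᵢ)` and then capped into `[1/n, 1-1/n]`. -/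
structure CGA (n : ℕ) (μ : ℝ) (f : (Fin n → Bool) → ℝ) (p0 : Fin n → ℝ) where
  Omega : Type
  [measSpace : MeasurableSpace Omega]
  P : MeasureTheory.Measure Omega
  isProb : MeasureTheory.IsProbabilityMeasure P
  /-- the underlying i.i.d. uniform random variables -/
  u : Fin 2 → ℕ → Fin n → Omega → ℝ
  uMeas : ∀ k t i, Measurable (u k t i)
  uUnif : ∀ k t i, P.map (u k t i) = MeasureTheory.volume.restrict (Set.Icc (0 : ℝ) 1)
  uIndep : ProbabilityTheory.iIndepFun
    (m := fun _ : Fin 2 × ℕ × Fin n => (inferInstance : MeasurableSpace ℝ))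
    (fun kti ω => u kti.1 kti.2.1 kti.2.2 ω) P
  /-- the frequency vector at each iteration -/
  p : ℕ → Omega → Fin n → ℝ
  /-- the two samples of each iteration -/
  x : Fin 2 → ℕ → Omega → Fin n → Bool
  hp0 : ∀ ω i, p 0 ω i = p0 i
  hx : ∀ k t ω i, x k t ω i = decide (u k t i ω < p t ω i)
  hupdate : ∀ t ω i, p (t + 1) ω i =
    capFreq n (p t ω i + (1 / μ) *
      (if f (x 0 t ω) ≥ f (x 1 t ω)
        then ((x 0 t ω i).toNat : ℝ) - ((x 1 t ω i).toNat : ℝ)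
        else ((x 1 t ω i).toNat : ℝ) - ((x 0 t ω i).toNat : ℝ)))

/-- `f` weakly prefers 1s over 0s at position `i`: flipping a `0` at position `i`
to a `1` never decreases the fitness. -/
def WeaklyPrefersOne {n : ℕ} (f : (Fin n → Bool) → ℝ) (i : Fin n) : Prop :=
  ∀ x y : Fin n → Bool, x i = true → y i = false →
    (∀ j : Fin n, j ≠ i → x j = y j) → f x ≥ f y

namespace CGADrift

abbrev Idx (n : ℕ) := Fin 2 × ℕ × Fin n

/-- the bits sampled at time `t` given frequencies `P` and uniforms `v` -/
noncomputable def bits (n : ℕ) (P : Fin n → ℝ) (k : Fin 2) (t : ℕ) (v : Idx n → ℝ) : Fin n → Bool :=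
  fun j => decide (v (k, t, j) < P j)

/-- the (pre-scaling) increment at position `j` -/
noncomputable def Dval {n : ℕ} (f : (Fin n → Bool) → ℝ) (P : Fin n → ℝ) (t : ℕ)
    (v : Idx n → ℝ) (j : Fin n) : ℝ :=
  if f (bits n P 0 t v) ≥ f (bits n P 1 t v)
    then ((bits n P 0 t v j).toNat : ℝ) - ((bits n P 1 t v j).toNat : ℝ)
    else ((bits n P 1 t v j).toNat : ℝ) - ((bits n P 0 t v j).toNat : ℝ)

noncomputable def simP (n : ℕ) (μ : ℝ) (f : (Fin n → Bool) → ℝ) :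
    ℕ → (Idx n → ℝ) → Fin n → ℝ
  | 0, _ => fun _ => 1/2
  | (t+1), v => fun j =>
      capFreq n (simP n μ f t v j + (1/μ) * Dval f (simP n μ f t v) t v j)

noncomputable def simQ (n : ℕ) (μ : ℝ) (f : (Fin n → Bool) → ℝ) (i : Fin n) (γ : ℝ) :
    ℕ → (Idx n → ℝ) → ℝ
  | 0, _ => 1/2
  | (t+1), v => if simQ n μ f i γ t v ≤ 1/2 - γ then simQ n μ f i γ t v
      else simP n μ f (t+1) v i

lemma Dval_mem {n : ℕ} (f : (Fin n → Bool) → ℝ) (P : Fin n → ℝ) (t : ℕ)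
    (v : Idx n → ℝ) (j : Fin n) : Dval f P t v j = -1 ∨ Dval f P t v j = 0 ∨ Dval f P t v j = 1 := by
  unfold Dval
  rcases Bool.eq_false_or_eq_true (bits n P 0 t v j) with h0 | h0 <;>
    rcases Bool.eq_false_or_eq_true (bits n P 1 t v j) with h1 | h1 <;>
      rw [h0, h1] <;> split_ifs <;> norm_num

/-- locality : `simP` depends only on coordinates of time `< t`. -/
lemma simP_congr {n : ℕ} (μ : ℝ) (f : (Fin n → Bool) → ℝ) (t : ℕ) (v w : Idx n → ℝ)
    (h : ∀ k s j, s < t → v (k, s, j) = w (k, s, j)) :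
    simP n μ f t v = simP n μ f t w := by
  induction t with
  | zero => rfl
  | succ t ih =>
    have hP : simP n μ f t v = simP n μ f t w :=
      ih (fun k s j hs => h k s j (Nat.lt_succ_of_lt hs))
    funext j
    have hb : ∀ k : Fin 2, bits n (simP n μ f t w) k t v = bits n (simP n μ f t w) k t w := by
      intro k; funext j'; unfold bits; rw [h k t j' (Nat.lt_succ_self t)]
    show capFreq n (simP n μ f t v j + (1/μ) * Dval f (simP n μ f t v) t v j) = _
    unfold Dval
    rw [hP, hb 0, hb 1]
    rfl


section Swap

/-- the swap of the two time-`t` position-`i` uniforms -/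
def swp (n : ℕ) (i : Fin n) (t : ℕ) : Idx n ≃ Idx n :=
  Equiv.swap ((0 : Fin 2), t, i) ((1 : Fin 2), t, i)

lemma swp_fix {n : ℕ} {i : Fin n} {t : ℕ} {k : Fin 2} {s : ℕ} {j : Fin n}
    (h : s ≠ t ∨ j ≠ i) : swp n i t (k, s, j) = (k, s, j) := by
  apply Equiv.swap_apply_of_ne_of_ne <;> rcases h with h | h <;> simp [Prod.ext_iff, h]

lemma simP_swp {n : ℕ} (μ : ℝ) (f : (Fin n → Bool) → ℝ) (i : Fin n) (t : ℕ)
    (v : Idx n → ℝ) : simP n μ f t (v ∘ swp n i t) = simP n μ f t v := by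
  apply simP_congr
  intro k s j hs
  simp only [Function.comp_apply, swp_fix (Or.inl hs.ne)]

lemma bits_swp {n : ℕ} {i : Fin n} {t : ℕ} (P : Fin n → ℝ) (v : Idx n → ℝ) (k k' : Fin 2)
    (hkk' : swp n i t (k, t, i) = (k', t, i)) :
    bits n P k t (v ∘ swp n i t) = Function.update (bits n P k t v) i (bits n P k' t v i) := by
  funext j
  by_cases hj : j = i
  · subst hj
    rw [Function.update_self]
    unfold bits
    simp only [Function.comp_apply, hkk']
  · rw [Function.update_of_ne hj]
    unfold bits
    simp only [Function.comp_apply, swp_fix (Or.inr hj)]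

lemma swp01 {n : ℕ} {i : Fin n} {t : ℕ} : swp n i t ((0 : Fin 2), t, i) = ((1 : Fin 2), t, i) :=
  Equiv.swap_apply_left _ _
lemma swp10 {n : ℕ} {i : Fin n} {t : ℕ} : swp n i t ((1 : Fin 2), t, i) = ((0 : Fin 2), t, i) :=
  Equiv.swap_apply_right _ _

lemma toNat_diff_ge (a b : Bool) (c : Prop) [Decidable c] :
    (-1 : ℝ) ≤ (if c then ((a.toNat : ℝ) - (b.toNat : ℝ)) else ((b.toNat : ℝ) - (a.toNat : ℝ))) := by
  cases a <;> cases b <;> split_ifs <;> norm_num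

lemma dval_pair {n : ℕ} {f : (Fin n → Bool) → ℝ} {i : Fin n} (t : ℕ)
    (hf : WeaklyPrefersOne f i) (P : Fin n → ℝ) (v : Idx n → ℝ) :
    0 ≤ Dval f P t v i + Dval f P t (v ∘ swp n i t) i := by
  set x0 := bits n P 0 t v with hx0
  set x1 := bits n P 1 t v with hx1
  have hy0 : bits n P 0 t (v ∘ swp n i t) = Function.update x0 i (x1 i) :=
    bits_swp P v 0 1 swp01
  have hy1 : bits n P 1 t (v ∘ swp n i t) = Function.update x1 i (x0 i) :=
    bits_swp P v 1 0 swp10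
  unfold Dval
  rw [hy0, hy1, ← hx0, ← hx1]
  rcases Bool.eq_false_or_eq_true (x0 i) with h0 | h0 <;>
    rcases Bool.eq_false_or_eq_true (x1 i) with h1 | h1
  -- order of cases: (tt,tt), (tt,ff), (ff,tt), (ff,ff)
  · have u0 : Function.update x0 i (x1 i) = x0 := by
      rw [show x1 i = x0 i by rw [h0, h1]]; exact Function.update_eq_self _ _
    have u1 : Function.update x1 i (x0 i) = x1 := by
      rw [show x0 i = x1 i by rw [h0, h1]]; exact Function.update_eq_self _ _
    rw [u0, u1, h0, h1]
    split_ifs <;> norm_num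
  · -- x0 i = true, x1 i = false
    by_cases hc : f x0 ≥ f x1
    · rw [if_pos hc]
      have hX := toNat_diff_ge (Function.update x0 i (x1 i) i) (Function.update x1 i (x0 i) i)
        (f (Function.update x0 i (x1 i)) ≥ f (Function.update x1 i (x0 i)))
      have hA : ((x0 i).toNat : ℝ) - ((x1 i).toNat : ℝ) = 1 := by rw [h0, h1]; norm_num
      linarith
    · push_neg at hc
      have e0 : f x0 ≥ f (Function.update x0 i (x1 i)) :=
        hf x0 (Function.update x0 i (x1 i)) h0
          (by rw [Function.update_self, h1]) (fun j hj => (Function.update_of_ne hj _ _).symm)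
      have e1 : f (Function.update x1 i (x0 i)) ≥ f x1 :=
        hf (Function.update x1 i (x0 i)) x1
          (by rw [Function.update_self, h0]) h1 (fun j hj => Function.update_of_ne hj _ _)
      have hlt : ¬ (f (Function.update x0 i (x1 i)) ≥ f (Function.update x1 i (x0 i))) := by
        push_neg
        exact lt_of_le_of_lt e0 (lt_of_lt_of_le hc e1)
      have hA : ((x1 i).toNat : ℝ) - ((x0 i).toNat : ℝ) = -1 := by rw [h0, h1]; norm_num
      have hB : ((Function.update x1 i (x0 i) i).toNat : ℝ)
          - ((Function.update x0 i (x1 i) i).toNat : ℝ) = 1 := by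
        rw [Function.update_self, Function.update_self, h0, h1]; norm_num
      rw [if_neg (not_le.mpr hc), if_neg hlt, hA, hB]
      norm_num
  · -- x0 i = false, x1 i = true
    by_cases hc : f x0 ≥ f x1
    · have e0 : f (Function.update x0 i (x1 i)) ≥ f x0 :=
        hf (Function.update x0 i (x1 i)) x0
          (by rw [Function.update_self, h1]) h0 (fun j hj => Function.update_of_ne hj _ _)
      have e1 : f x1 ≥ f (Function.update x1 i (x0 i)) :=
        hf x1 (Function.update x1 i (x0 i)) h1
          (by rw [Function.update_self, h0]) (fun j hj => (Function.update_of_ne hj _ _).symm)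
      have hge : f (Function.update x0 i (x1 i)) ≥ f (Function.update x1 i (x0 i)) :=
        le_trans (le_trans e1 hc) e0
      have hA : ((x0 i).toNat : ℝ) - ((x1 i).toNat : ℝ) = -1 := by rw [h0, h1]; norm_num
      have hB : ((Function.update x0 i (x1 i) i).toNat : ℝ)
          - ((Function.update x1 i (x0 i) i).toNat : ℝ) = 1 := by
        rw [Function.update_self, Function.update_self, h0, h1]; norm_num
      rw [if_pos hc, if_pos hge, hA, hB]
      norm_num
    · rw [if_neg hc]
      have hX := toNat_diff_ge (Function.update x0 i (x1 i) i) (Function.update x1 i (x0 i) i)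
        (f (Function.update x0 i (x1 i)) ≥ f (Function.update x1 i (x0 i)))
      have hA : ((x1 i).toNat : ℝ) - ((x0 i).toNat : ℝ) = 1 := by rw [h0, h1]; norm_num
      linarith
  · have u0 : Function.update x0 i (x1 i) = x0 := by
      rw [show x1 i = x0 i by rw [h0, h1]]; exact Function.update_eq_self _ _
    have u1 : Function.update x1 i (x0 i) = x1 := by
      rw [show x0 i = x1 i by rw [h0, h1]]; exact Function.update_eq_self _ _
    rw [u0, u1, h0, h1]
    split_ifs <;> norm_num

end Swap

section Analytic

open Real

/-- the grid of reachable frequency values -/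
def Gr (μ x : ℝ) : Prop := ∃ m : ℤ, x = 1/2 + (m : ℝ)/μ

lemma Gr_spacing {μ x y : ℝ} (hμ : 0 < μ) (hx : Gr μ x) (hy : Gr μ y) (hxy : x < y) :
    x + 1/μ ≤ y := by
  obtain ⟨m, rfl⟩ := hx
  obtain ⟨m', rfl⟩ := hy
  have h1 : (m : ℝ)/μ < (m' : ℝ)/μ := by linarith
  have h2 : (m : ℝ) < m' := by
    have := mul_lt_mul_of_pos_right h1 hμ
    rwa [div_mul_cancel₀ _ (ne_of_gt hμ), div_mul_cancel₀ _ (ne_of_gt hμ)] at this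
  have h3 : (m : ℤ) + 1 ≤ m' := by exact_mod_cast h2
  have h4 : ((m : ℝ) + 1) ≤ (m' : ℝ) := by exact_mod_cast h3
  have h5 : ((m : ℝ) + 1)/μ ≤ (m' : ℝ)/μ := by gcongr
  have : (m : ℝ)/μ + 1/μ ≤ (m' : ℝ)/μ := by
    rw [show (m : ℝ)/μ + 1/μ = ((m : ℝ) + 1)/μ by ring]
    exact h5
  linarith

section WithN

variable {n : ℕ} (hn : 2 ≤ n)
include hn

lemma n_facts : (0 : ℝ) < n ∧ 1/(n:ℝ) ≤ 1/2 ∧ (1:ℝ)/2 ≤ 1 - 1/n ∧ (1:ℝ) - 1/n ≤ 1 := by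
  have h2 : (2 : ℝ) ≤ n := by exact_mod_cast hn
  have h0 : (0 : ℝ) < n := by linarith
  have hh : 1/(n:ℝ) ≤ 1/2 := by
    rw [div_le_div_iff₀ h0 (by norm_num)]
    linarith
  refine ⟨h0, hh, by linarith, ?_⟩
  have : 0 < 1/(n:ℝ) := by positivity
  linarith

lemma capFreq_mem (w : ℝ) : 1/(n:ℝ) ≤ capFreq n w ∧ capFreq n w ≤ 1 - 1/n := by
  obtain ⟨h0, hh, hB, _⟩ := n_facts hn
  unfold capFreq
  constructor
  · exact le_max_left _ _
  · rw [max_le_iff]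
    exact ⟨by linarith, min_le_left _ _⟩

lemma capFreq_cases (w : ℝ) :
    capFreq n w = 1/(n:ℝ) ∨ capFreq n w = 1 - 1/n ∨ capFreq n w = w := by
  unfold capFreq
  rcases le_total w (1 - 1/(n:ℝ)) with h | h
  · rw [min_eq_right h]
    rcases le_total w (1/(n:ℝ)) with h' | h'
    · left; rw [max_eq_left h']
    · right; right; rw [max_eq_right h']
  · rw [min_eq_left h]
    obtain ⟨h0, hh, hB, _⟩ := n_facts hn
    right; left
    rw [max_eq_right (by linarith)]

lemma capFreq_eq_self {w : ℝ} (h1 : 1/(n:ℝ) ≤ w) (h2 : w ≤ 1 - 1/(n:ℝ)) :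
    capFreq n w = w := by
  unfold capFreq
  rw [min_eq_right h2, max_eq_right h1]

end WithN

/-- the invariant : frequencies at position `i` stay on the grid and inside the margins -/
lemma simP_inv {n : ℕ} (hn : 2 ≤ n) {μ : ℝ} (hμ : 0 < μ) {k : ℕ}
    (hk : (1 / 2 : ℝ) - 1 / (n : ℝ) = (k : ℝ) / μ)
    (f : (Fin n → Bool) → ℝ) (i : Fin n) (t : ℕ) (v : Idx n → ℝ) :
    Gr μ (simP n μ f t v i) ∧ 1/(n:ℝ) ≤ simP n μ f t v i ∧ simP n μ f t v i ≤ 1 - 1/n := by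
  obtain ⟨h0, hh, hB, _⟩ := n_facts hn
  have grn : Gr μ (1/(n:ℝ)) := ⟨-(k : ℤ), by push_cast [neg_div]; linarith⟩
  have grB : Gr μ (1 - 1/(n:ℝ)) := ⟨(k : ℤ), by push_cast; linarith⟩
  induction t with
  | zero =>
    refine ⟨⟨0, by show (1:ℝ)/2 = 1/2 + ((0:ℤ):ℝ)/μ; norm_num⟩, hh, hB⟩
  | succ t ih =>
    obtain ⟨⟨m, hm⟩, hlo, hhi⟩ := ih
    have hstep : simP n μ f (t+1) v i
        = capFreq n (simP n μ f t v i + (1/μ) * Dval f (simP n μ f t v) t v i) := rfl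
    set w := simP n μ f t v i + (1/μ) * Dval f (simP n μ f t v) t v i with hw
    have hgw : Gr μ w := by
      rcases Dval_mem f (simP n μ f t v) t v i with h | h | h
      · exact ⟨m - 1, by rw [hw, h, hm]; push_cast; ring⟩
      · exact ⟨m, by rw [hw, h, hm]; push_cast; ring⟩
      · exact ⟨m + 1, by rw [hw, h, hm]; push_cast; ring⟩
    refine ⟨?_, by rw [hstep]; exact (capFreq_mem hn w).1, by rw [hstep]; exact (capFreq_mem hn w).2⟩
    rw [hstep]
    rcases capFreq_cases hn w with h | h | h <;> rw [h]
    · exact grn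
    · exact grB
    · exact hgw

/-- the image-charge potential -/
noncomputable def gpot (l B x : ℝ) : ℝ :=
  Real.exp (-(l*(x-1/2))) + Real.exp (-(l*(2*B - x - 1/2)))

lemma gpot_pos (l B x : ℝ) : 0 < gpot l B x := by
  unfold gpot; positivity

lemma gpot_up {l B c x : ℝ} (hl : 0 ≤ l) (hc : 0 ≤ c) (hx : x ≤ B) :
    gpot l B (x + c) ≤ Real.cosh (l*c) * gpot l B x := by
  unfold gpot
  rw [Real.cosh_eq]
  rw [show -(l*((x+c)-1/2)) = -(l*(x-1/2)) + -(l*c) by ring, Real.exp_add]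
  rw [show -(l*(2*B - (x+c) - 1/2)) = -(l*(2*B - x - 1/2)) + l*c by ring, Real.exp_add]
  set t1 := Real.exp (-(l*(x-1/2)))
  set t2 := Real.exp (-(l*(2*B - x - 1/2)))
  set Ep := Real.exp (l*c)
  set Em := Real.exp (-(l*c))
  have ht : t2 ≤ t1 := by
    apply Real.exp_le_exp.mpr
    have : l*(x - 1/2) ≤ l*(2*B - x - 1/2) := by nlinarith
    linarith
  have hE : Em ≤ Ep := Real.exp_le_exp.mpr (by nlinarith)
  have h1 : 0 < t2 := Real.exp_pos _
  have h2 : 0 < Em := Real.exp_pos _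
  nlinarith [mul_nonneg (sub_nonneg.2 ht) (sub_nonneg.2 hE)]

lemma gpot_updown {l B c x : ℝ} :
    gpot l B (x + c) + gpot l B (x - c) = 2 * Real.cosh (l*c) * gpot l B x := by
  unfold gpot
  rw [Real.cosh_eq]
  rw [show -(l*((x+c)-1/2)) = -(l*(x-1/2)) + -(l*c) by ring, Real.exp_add]
  rw [show -(l*(2*B - (x+c) - 1/2)) = -(l*(2*B - x - 1/2)) + l*c by ring, Real.exp_add]
  rw [show -(l*((x-c)-1/2)) = -(l*(x-1/2)) + l*c by ring, Real.exp_add]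
  rw [show -(l*(2*B - (x-c) - 1/2)) = -(l*(2*B - x - 1/2)) + -(l*c) by ring, Real.exp_add]
  ring

lemma gpot_top {l B c : ℝ} (hl : 0 ≤ l) (hc : 0 ≤ c) :
    gpot l B B + gpot l B (B - c) ≤ 2 * Real.cosh (l*c) * gpot l B B := by
  have h1 : (1:ℝ) ≤ Real.cosh (l*c) := Real.one_le_cosh _
  have h2 : 0 < gpot l B (B - c) := gpot_pos _ _ _
  have h3 : 0 < gpot l B B := gpot_pos _ _ _
  have key : gpot l B (B - c) = Real.cosh (l*c) * gpot l B B := by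
    unfold gpot
    rw [Real.cosh_eq]
    rw [show -(l*((B-c)-1/2)) = -(l*(B-1/2)) + l*c by ring, Real.exp_add]
    rw [show -(l*(2*B - (B-c) - 1/2)) = -(l*(B-1/2)) + -(l*c) by ring, Real.exp_add]
    rw [show -(l*(2*B - B - 1/2)) = -(l*(B-1/2)) by ring]
    ring
  rw [key]
  nlinarith

lemma gpot_stay {l B c x : ℝ} : gpot l B x ≤ Real.cosh (l*c) * gpot l B x := by
  have h1 : (1:ℝ) ≤ Real.cosh (l*c) := Real.one_le_cosh _
  have h2 : 0 < gpot l B x := gpot_pos _ _ _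
  nlinarith

/-- the one-step pair bound, including the caps -/
lemma key_step {n : ℕ} (hn : 2 ≤ n) {μ : ℝ} (hμ : 0 < μ) {l : ℝ} (hl : 0 ≤ l)
    {x : ℝ} (hx_lo : 1/(n:ℝ) + 1/μ ≤ x) (hx_hi : x + 1/μ ≤ 1 - 1/(n:ℝ) ∨ x = 1 - 1/(n:ℝ))
    {d0 d1 : ℝ} (h0 : d0 = -(1/μ) ∨ d0 = 0 ∨ d0 = 1/μ) (h1 : d1 = -(1/μ) ∨ d1 = 0 ∨ d1 = 1/μ)
    (hsum : 0 ≤ d0 + d1) :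
    gpot l (1 - 1/(n:ℝ)) (capFreq n (x + d0)) + gpot l (1 - 1/(n:ℝ)) (capFreq n (x + d1))
      ≤ 2 * Real.cosh (l * (1/μ)) * gpot l (1 - 1/(n:ℝ)) x := by
  obtain ⟨hn0, hh, hB2, _⟩ := n_facts hn
  have hc : 0 < 1/μ := by positivity
  have hxB : x ≤ 1 - 1/(n:ℝ) := by rcases hx_hi with h | h <;> linarith
  -- cap computations
  have capm : capFreq n (x - 1/μ) = x - 1/μ :=
    capFreq_eq_self hn (by linarith) (by linarith)
  have cap0 : capFreq n x = x := capFreq_eq_self hn (by linarith) (by linarith)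
  have capp : gpot l (1 - 1/(n:ℝ)) (capFreq n (x + 1/μ))
      ≤ Real.cosh (l*(1/μ)) * gpot l (1 - 1/(n:ℝ)) x := by
    rcases hx_hi with h | h
    · rw [capFreq_eq_self hn (by linarith) (by linarith)]
      exact gpot_up hl (le_of_lt hc) hxB
    · have hcap : capFreq n (x + 1/μ) = 1 - 1/(n:ℝ) := by
        unfold capFreq
        rw [min_eq_left (by linarith), max_eq_right (by linarith)]
      rw [hcap, h]
      exact gpot_stay
  have capup : gpot l (1 - 1/(n:ℝ)) (capFreq n (x + 1/μ))
        + gpot l (1 - 1/(n:ℝ)) (capFreq n (x - 1/μ))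
      ≤ 2 * Real.cosh (l*(1/μ)) * gpot l (1 - 1/(n:ℝ)) x := by
    rcases hx_hi with h | h
    · rw [capFreq_eq_self hn (by linarith) (by linarith), capm]
      exact le_of_eq gpot_updown
    · have hcap : capFreq n (x + 1/μ) = 1 - 1/(n:ℝ) := by
        unfold capFreq
        rw [min_eq_left (by linarith), max_eq_right (by linarith)]
      rw [hcap, capm, h]
      have := gpot_top (l := l) (B := 1 - 1/(n:ℝ)) (c := 1/μ) hl (le_of_lt hc)
      linarith
  have capz : gpot l (1 - 1/(n:ℝ)) (capFreq n (x + 0))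
      ≤ Real.cosh (l*(1/μ)) * gpot l (1 - 1/(n:ℝ)) x := by
    rw [add_zero, cap0]
    exact gpot_stay
  have em : x + -(1/μ) = x - 1/μ := by ring
  rcases h0 with rfl | rfl | rfl <;> rcases h1 with rfl | rfl | rfl
  · linarith
  · linarith
  · rw [em]; linarith [capup]
  · linarith
  · linarith [capz]
  · linarith [capz, capp]
  · rw [em]; linarith [capup]
  · linarith [capz, capp]
  · linarith [capp]

end Analytic

section Stopped

variable {n : ℕ} {μ : ℝ} {f : (Fin n → Bool) → ℝ} {i : Fin n} {γ : ℝ}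

lemma simQ_congr (t : ℕ) (v w : Idx n → ℝ)
    (h : ∀ k s j, s < t → v (k, s, j) = w (k, s, j)) :
    simQ n μ f i γ t v = simQ n μ f i γ t w := by
  induction t with
  | zero => rfl
  | succ t ih =>
    have h1 : simQ n μ f i γ t v = simQ n μ f i γ t w :=
      ih (fun k s j hs => h k s j (Nat.lt_succ_of_lt hs))
    have h2 : simP n μ f (t+1) v = simP n μ f (t+1) w := simP_congr μ f (t+1) v w h
    show (if simQ n μ f i γ t v ≤ 1/2 - γ then simQ n μ f i γ t v else simP n μ f (t+1) v i) = _
    rw [h1, h2]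
    rfl

lemma simQ_swp (t : ℕ) (v : Idx n → ℝ) :
    simQ n μ f i γ t (v ∘ swp n i t) = simQ n μ f i γ t v :=
  simQ_congr t _ _ (fun k s j hs => by
    simp only [Function.comp_apply, swp_fix (Or.inl hs.ne)])

lemma simQ_succ (t : ℕ) (v : Idx n → ℝ) :
    simQ n μ f i γ (t+1) v = if simQ n μ f i γ t v ≤ 1/2 - γ then simQ n μ f i γ t v
      else simP n μ f (t+1) v i := rfl

lemma simQ_gt (hγ : 0 < γ) (t : ℕ) (v : Idx n → ℝ) (h : 1/2 - γ < simQ n μ f i γ t v) :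
    simQ n μ f i γ t v = simP n μ f t v i ∧ ∀ s, s ≤ t → 1/2 - γ < simP n μ f s v i := by
  induction t with
  | zero =>
    refine ⟨rfl, fun s hs => ?_⟩
    interval_cases s
    show (1:ℝ)/2 - γ < 1/2
    linarith
  | succ t ih =>
    rw [simQ_succ] at h ⊢
    by_cases hst : simQ n μ f i γ t v ≤ 1/2 - γ
    · rw [if_pos hst] at h; linarith
    · rw [if_neg hst] at h ⊢
      push_neg at hst
      obtain ⟨h1, h2⟩ := ih hst
      refine ⟨rfl, fun s hs => ?_⟩
      rcases Nat.lt_succ_iff_lt_or_eq.mp (Nat.lt_succ_of_le hs) with hs' | rfl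
      · exact h2 s (Nat.lt_succ_iff.mp hs')
      · exact h

lemma simQ_ge (t : ℕ) (v : Idx n → ℝ) (h : ∀ s, s ≤ t → 1/2 - γ < simP n μ f s v i) :
    1/2 - γ < simQ n μ f i γ t v := by
  induction t with
  | zero => exact h 0 (le_refl 0)
  | succ t ih =>
    have hq : 1/2 - γ < simQ n μ f i γ t v := ih (fun s hs => h s (Nat.le_succ_of_le hs))
    rw [simQ_succ, if_neg (not_le.mpr hq)]
    exact h (t+1) (le_refl _)

lemma simQ_range (hn : 2 ≤ n) (hμ : 0 < μ) {k : ℕ}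
    (hk : (1 / 2 : ℝ) - 1 / (n : ℝ) = (k : ℝ) / μ) (t : ℕ) (v : Idx n → ℝ) :
    0 ≤ simQ n μ f i γ t v ∧ simQ n μ f i γ t v ≤ 1 := by
  obtain ⟨h0, hh, hB, hB1⟩ := n_facts hn
  induction t with
  | zero => constructor <;> norm_num [simQ]
  | succ t ih =>
    rw [simQ_succ]
    split_ifs
    · exact ih
    · obtain ⟨_, hlo, hhi⟩ := simP_inv hn hμ hk f i (t+1) v
      have : 0 ≤ 1/(n:ℝ) := by positivity
      exact ⟨by linarith, by linarith⟩

/-- the pointwise one-step pair inequality for the stopped process -/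
lemma step_pair (hn : 2 ≤ n) (hμ : 0 < μ) {k : ℕ}
    (hk : (1 / 2 : ℝ) - 1 / (n : ℝ) = (k : ℝ) / μ)
    (hf : WeaklyPrefersOne f i) (hγ : 0 < γ) (hγn : 1/(n:ℝ) ≤ 1/2 - γ)
    {l : ℝ} (hl : 0 ≤ l) (t : ℕ) (v : Idx n → ℝ) :
    gpot l (1 - 1/(n:ℝ)) (simQ n μ f i γ (t+1) v)
      + gpot l (1 - 1/(n:ℝ)) (simQ n μ f i γ (t+1) (v ∘ swp n i t))
      ≤ 2 * Real.cosh (l * (1/μ)) * gpot l (1 - 1/(n:ℝ)) (simQ n μ f i γ t v) := by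
  have hqs : simQ n μ f i γ t (v ∘ swp n i t) = simQ n μ f i γ t v := simQ_swp t v
  have hcosh := Real.one_le_cosh (l * (1/μ))
  by_cases hst : simQ n μ f i γ t v ≤ 1/2 - γ
  · rw [simQ_succ, simQ_succ, hqs, if_pos hst, if_pos hst]
    have := gpot_pos l (1 - 1/(n:ℝ)) (simQ n μ f i γ t v)
    nlinarith
  · rw [simQ_succ, simQ_succ, hqs, if_neg hst, if_neg hst]
    push_neg at hst
    obtain ⟨hq, _⟩ := simQ_gt hγ t v hst
    obtain ⟨hgr, hlo, hhi⟩ := simP_inv hn hμ hk f i t v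
    have grn : Gr μ (1/(n:ℝ)) := ⟨-(k : ℤ), by push_cast [neg_div]; linarith⟩
    have grB : Gr μ (1 - 1/(n:ℝ)) := ⟨(k : ℤ), by push_cast; linarith⟩
    have hx_gt : 1/2 - γ < simP n μ f t v i := by rw [← hq]; exact hst
    have hx_lo : 1/(n:ℝ) + 1/μ ≤ simP n μ f t v i :=
      Gr_spacing hμ grn hgr (by linarith)
    have hx_hi : simP n μ f t v i + 1/μ ≤ 1 - 1/(n:ℝ) ∨ simP n μ f t v i = 1 - 1/(n:ℝ) := by
      rcases lt_or_eq_of_le hhi with h | h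
      · left; exact Gr_spacing hμ hgr grB h
      · right; exact h
    have e1 : simP n μ f (t+1) v i
        = capFreq n (simP n μ f t v i + (1/μ) * Dval f (simP n μ f t v) t v i) := rfl
    have e2 : simP n μ f (t+1) (v ∘ swp n i t) i
        = capFreq n (simP n μ f t v i
            + (1/μ) * Dval f (simP n μ f t v) t (v ∘ swp n i t) i) := by
      show capFreq n (simP n μ f t (v ∘ swp n i t) i
          + (1/μ) * Dval f (simP n μ f t (v ∘ swp n i t)) t (v ∘ swp n i t) i) = _
      rw [simP_swp]
    rw [hq, e1, e2]
    have hc : (0:ℝ) < 1/μ := by positivity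
    have hd : ∀ w : Idx n → ℝ, (1/μ) * Dval f (simP n μ f t v) t w i = -(1/μ)
        ∨ (1/μ) * Dval f (simP n μ f t v) t w i = 0
        ∨ (1/μ) * Dval f (simP n μ f t v) t w i = 1/μ := by
      intro w
      rcases Dval_mem f (simP n μ f t v) t w i with h | h | h <;> rw [h]
      · left; ring
      · right; left; ring
      · right; right; ring
    have hsum : 0 ≤ (1/μ) * Dval f (simP n μ f t v) t v i
        + (1/μ) * Dval f (simP n μ f t v) t (v ∘ swp n i t) i := by
      have := dval_pair t hf (simP n μ f t v) v
      nlinarith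
    exact key_step hn hμ hl hx_lo hx_hi (hd v) (hd _) hsum

end Stopped

section Meas

variable {n : ℕ} {μ : ℝ} {f : (Fin n → Bool) → ℝ} {i : Fin n} {γ : ℝ}

lemma measurable_simP (t : ℕ) : Measurable (fun v : Idx n → ℝ => simP n μ f t v) := by
  induction t with
  | zero => exact measurable_const
  | succ t ih =>
    have hPj : ∀ j : Fin n, Measurable (fun v : Idx n → ℝ => simP n μ f t v j) :=
      fun j => (measurable_pi_apply j).comp ih
    have hbits : ∀ k : Fin 2, Measurable (fun v : Idx n → ℝ => bits n (simP n μ f t v) k t v) := by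
      intro k
      apply measurable_pi_lambda
      intro j'
      have hset : MeasurableSet {v : Idx n → ℝ | v (k, t, j') < simP n μ f t v j'} :=
        measurableSet_lt (measurable_pi_apply _) (hPj j')
      apply measurable_to_countable'
      intro b
      cases b
      · convert hset.compl using 1
        ext v
        simp [bits]
      · convert hset using 1
        ext v
        simp [bits]
    have hDv : ∀ j : Fin n,
        Measurable (fun v : Idx n → ℝ => Dval f (simP n μ f t v) t v j) := by
      intro j
      unfold Dval
      have hc : MeasurableSet {v : Idx n → ℝ |
          f (bits n (simP n μ f t v) 0 t v) ≥ f (bits n (simP n μ f t v) 1 t v)} :=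
        measurableSet_le ((measurable_of_countable f).comp (hbits 1))
          ((measurable_of_countable f).comp (hbits 0))
      have hcoord : ∀ k : Fin 2,
          Measurable (fun v : Idx n → ℝ => ((bits n (simP n μ f t v) k t v j).toNat : ℝ)) :=
        fun k => (measurable_of_countable (fun b : Bool => ((b.toNat : ℝ)))).comp
          ((measurable_pi_apply j).comp (hbits k))
      exact Measurable.ite hc ((hcoord 0).sub (hcoord 1)) ((hcoord 1).sub (hcoord 0))
    apply measurable_pi_lambda
    intro j
    show Measurable fun v : Idx n → ℝ =>
      capFreq n (simP n μ f t v j + 1/μ * Dval f (simP n μ f t v) t v j)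
    unfold capFreq
    exact Measurable.max measurable_const
      (Measurable.min measurable_const ((hPj j).add (measurable_const.mul (hDv j))))

lemma measurable_simQ (t : ℕ) : Measurable (simQ n μ f i γ t) := by
  induction t with
  | zero => exact measurable_const
  | succ t ih =>
    have : simQ n μ f i γ (t+1) = fun v => if simQ n μ f i γ t v ≤ 1/2 - γ
        then simQ n μ f i γ t v else simP n μ f (t+1) v i := rfl
    rw [this]
    exact Measurable.ite (measurableSet_le ih measurable_const) ih
      ((measurable_pi_apply i).comp (measurable_simP (t+1)))

lemma continuous_gpot (l B : ℝ) : Continuous (gpot l B) := by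
  unfold gpot
  fun_prop

lemma gpot_bound {l B x : ℝ} (hl : 0 ≤ l) (hB1 : 1/2 ≤ B) (hB2 : B ≤ 1)
    (hx0 : 0 ≤ x) (hx1 : x ≤ 1) : gpot l B x ≤ 2 * Real.exp l := by
  unfold gpot
  have h1 : Real.exp (-(l*(x-1/2))) ≤ Real.exp l :=
    Real.exp_le_exp.mpr (by nlinarith)
  have h2 : Real.exp (-(l*(2*B - x - 1/2))) ≤ Real.exp l :=
    Real.exp_le_exp.mpr (by nlinarith)
  linarith

end Meas

section Prob

open MeasureTheory ProbabilityTheory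

variable {n : ℕ} {Ω : Type*} [MeasurableSpace Ω] {P : Measure Ω}

/-- finite-dimensional boxes in the product space -/
def isBox (n : ℕ) (S : Set (Idx n → ℝ)) : Prop :=
  ∃ (s : Finset (Idx n)) (A : Idx n → Set ℝ),
    (∀ c ∈ s, MeasurableSet (A c)) ∧ S = {v | ∀ c ∈ s, v c ∈ A c}

lemma isPiSystem_boxes : IsPiSystem {S : Set (Idx n → ℝ) | isBox n S} := by
  rintro S1 ⟨s1, A1, hA1, rfl⟩ S2 ⟨s2, A2, hA2, rfl⟩ -
  refine ⟨s1 ∪ s2,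
    fun c => (if c ∈ s1 then A1 c else Set.univ) ∩ (if c ∈ s2 then A2 c else Set.univ),
    ?_, ?_⟩
  · intro c _
    apply MeasurableSet.inter
    · by_cases h : c ∈ s1
      · rw [if_pos h]; exact hA1 c h
      · rw [if_neg h]; exact MeasurableSet.univ
    · by_cases h : c ∈ s2
      · rw [if_pos h]; exact hA2 c h
      · rw [if_neg h]; exact MeasurableSet.univ
  · ext v
    simp only [Set.mem_inter_iff, Set.mem_setOf_eq, Finset.mem_union]
    constructor
    · rintro ⟨h1, h2⟩ c hc
      constructor
      · by_cases h : c ∈ s1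
        · rw [if_pos h]; exact h1 c h
        · rw [if_neg h]; trivial
      · by_cases h : c ∈ s2
        · rw [if_pos h]; exact h2 c h
        · rw [if_neg h]; trivial
    · intro h
      constructor
      · intro c hc
        have := (h c (Or.inl hc)).1
        rwa [if_pos hc] at this
      · intro c hc
        have := (h c (Or.inr hc)).2
        rwa [if_pos hc] at this

lemma box_measurable {s : Finset (Idx n)} {A : Idx n → Set ℝ}
    (hA : ∀ c ∈ s, MeasurableSet (A c)) :
    MeasurableSet {v : Idx n → ℝ | ∀ c ∈ s, v c ∈ A c} := by
  have : {v : Idx n → ℝ | ∀ c ∈ s, v c ∈ A c}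
      = ⋂ c ∈ s, (fun v : Idx n → ℝ => v c) ⁻¹' (A c) := by
    ext v; simp
  rw [this]
  exact MeasurableSet.biInter s.countable_toSet
    (fun c hc => (measurable_pi_apply c) (hA c hc))

lemma generateFrom_boxes :
    (inferInstance : MeasurableSpace (Idx n → ℝ))
      = MeasurableSpace.generateFrom {S : Set (Idx n → ℝ) | isBox n S} := by
  apply le_antisymm
  · show MeasurableSpace.pi ≤ _
    refine iSup_le fun c => ?_
    intro s hs
    obtain ⟨A, hA, rfl⟩ := hs
    apply MeasurableSpace.measurableSet_generateFrom
    refine ⟨{c}, fun _ => A, by simp [hA], ?_⟩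
    ext v; simp
  · apply MeasurableSpace.generateFrom_le
    rintro S ⟨s, A, hA, rfl⟩
    exact box_measurable hA

/-- joint law of a box for an independent family with uniform marginals -/
lemma map_box_eq (w : Idx n → Ω → ℝ) (hwm : ∀ c, Measurable (w c))
    (hwU : ∀ c, P.map (w c) = MeasureTheory.volume.restrict (Set.Icc (0 : ℝ) 1))
    (hwI : iIndepFun (m := fun _ : Idx n => (inferInstance : MeasurableSpace ℝ)) w P)
    (s : Finset (Idx n)) (A : Idx n → Set ℝ) (hA : ∀ c ∈ s, MeasurableSet (A c)) :
    P.map (fun ω c => w c ω) {v | ∀ c ∈ s, v c ∈ A c}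
      = ∏ c ∈ s, (MeasureTheory.volume.restrict (Set.Icc (0 : ℝ) 1)) (A c) := by
  have hwm' : Measurable (fun ω c => w c ω) := measurable_pi_lambda _ hwm
  rw [Measure.map_apply hwm' (box_measurable hA)]
  have hpre : (fun ω c => w c ω) ⁻¹' {v | ∀ c ∈ s, v c ∈ A c}
      = ⋂ c ∈ s, (w c) ⁻¹' (A c) := by
    ext ω; simp
  rw [hpre, hwI.measure_inter_preimage_eq_mul s (fun c hc => hA c hc)]
  apply Finset.prod_congr rfl
  intro c hc
  rw [← hwU c, Measure.map_apply (hwm c) (hA c hc)]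

/-- reindexing an independent family by an equiv -/
lemma iIndepFun_reindex (w : Idx n → Ω → ℝ) (hwm : ∀ c, Measurable (w c))
    (hwI : iIndepFun (m := fun _ : Idx n => (inferInstance : MeasurableSpace ℝ)) w P)
    (e : Idx n ≃ Idx n) :
    iIndepFun (m := fun _ : Idx n => (inferInstance : MeasurableSpace ℝ))
      (fun c => w (e c)) P := by
  rw [iIndepFun_iff_measure_inter_preimage_eq_mul]
  intro S sets hsets
  have hre : (⋂ c ∈ S, (w (e c)) ⁻¹' (sets c))
      = ⋂ c' ∈ S.image (⇑e), (w c') ⁻¹' (sets (e.symm c')) := by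
    ext ω
    simp only [Set.mem_iInter, Finset.mem_image]
    constructor
    · rintro h c' ⟨c, hc, rfl⟩
      rw [Equiv.symm_apply_apply]
      exact h c hc
    · intro h c hc
      have := h (e c) ⟨c, hc, rfl⟩
      rwa [Equiv.symm_apply_apply] at this
  rw [hre, hwI.measure_inter_preimage_eq_mul (S.image (⇑e))
    (fun c' hc' => by
      obtain ⟨c, hc, rfl⟩ := Finset.mem_image.mp hc'
      rw [Equiv.symm_apply_apply]
      exact hsets c hc)]
  rw [Finset.prod_image (fun c _ c' _ h => e.injective h)]
  apply Finset.prod_congr rfl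
  intro c _
  rw [Equiv.symm_apply_apply]

/-- the joint law is invariant under reindexing by any equiv -/
lemma law_reindex [IsProbabilityMeasure P] (w : Idx n → Ω → ℝ)
    (hwm : ∀ c, Measurable (w c))
    (hwU : ∀ c, P.map (w c) = MeasureTheory.volume.restrict (Set.Icc (0 : ℝ) 1))
    (hwI : iIndepFun (m := fun _ : Idx n => (inferInstance : MeasurableSpace ℝ)) w P)
    (e : Idx n ≃ Idx n) :
    P.map (fun ω c => w (e c) ω) = P.map (fun ω c => w c ω) := by
  have hwm1 : Measurable (fun ω c => w c ω) := measurable_pi_lambda _ hwm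
  have hwm2 : Measurable (fun ω c => w (e c) ω) := measurable_pi_lambda _ (fun c => hwm (e c))
  have hP1 : IsProbabilityMeasure (P.map (fun ω c => w c ω)) :=
    Measure.isProbabilityMeasure_map hwm1.aemeasurable
  have hP2 : IsProbabilityMeasure (P.map (fun ω c => w (e c) ω)) :=
    Measure.isProbabilityMeasure_map hwm2.aemeasurable
  apply MeasureTheory.ext_of_generate_finite _ generateFrom_boxes isPiSystem_boxes
  · rintro S ⟨s, A, hA, rfl⟩
    rw [map_box_eq (fun c => w (e c)) (fun c => hwm (e c)) (fun c => hwU (e c))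
      (iIndepFun_reindex w hwm hwI e) s A hA,
      map_box_eq w hwm hwU hwI s A hA]
  · rw [measure_univ, measure_univ]

end Prob

section Main

open MeasureTheory ProbabilityTheory

variable {n : ℕ} {Ω : Type*} [MeasurableSpace Ω] {P : Measure Ω} [IsProbabilityMeasure P]
  {u : Idx n → Ω → ℝ} {μ : ℝ} {f : (Fin n → Bool) → ℝ} {i : Fin n} {γ : ℝ}

lemma integral_swap (hum : ∀ c, Measurable (u c))
    (huU : ∀ c, P.map (u c) = MeasureTheory.volume.restrict (Set.Icc (0:ℝ) 1))
    (huI : iIndepFun (m := fun _ : Idx n => (inferInstance : MeasurableSpace ℝ)) u P)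
    (e : Idx n ≃ Idx n) {H : (Idx n → ℝ) → ℝ} (hH : Measurable H) :
    ∫ ω, H ((fun c => u c ω) ∘ ⇑e) ∂P = ∫ ω, H (fun c => u c ω) ∂P := by
  have h2 : Measurable (fun ω => (fun c : Idx n => u (e c) ω)) :=
    measurable_pi_lambda _ (fun c => hum (e c))
  have h1 : Measurable (fun ω => (fun c : Idx n => u c ω)) := measurable_pi_lambda _ hum
  have key := law_reindex u hum huU huI e
  calc ∫ ω, H ((fun c => u c ω) ∘ ⇑e) ∂P
      = ∫ v, H v ∂(P.map (fun ω c => u (e c) ω)) :=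
        (integral_map h2.aemeasurable hH.aestronglyMeasurable).symm
    _ = ∫ v, H v ∂(P.map (fun ω c => u c ω)) := by rw [key]
    _ = ∫ ω, H (fun c => u c ω) ∂P := integral_map h1.aemeasurable hH.aestronglyMeasurable

lemma integrable_of_bound {F : Ω → ℝ} (hm : Measurable F) (C : ℝ) (hb : ∀ ω, |F ω| ≤ C) :
    Integrable F P :=
  (integrable_const C).mono' hm.aestronglyMeasurable
    (Filter.Eventually.of_forall (fun ω => by rw [Real.norm_eq_abs]; exact hb ω))

lemma gpot_simQ_integrable (hn : 2 ≤ n) (hμ : 0 < μ) {k : ℕ}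
    (hk : (1 / 2 : ℝ) - 1 / (n : ℝ) = (k : ℝ) / μ) {l : ℝ} (hl : 0 ≤ l)
    (hum : ∀ c, Measurable (u c)) {W : Ω → Idx n → ℝ} (hW : Measurable W) (t : ℕ) :
    Integrable (fun ω => gpot l (1 - 1/(n:ℝ)) (simQ n μ f i γ t (W ω))) P := by
  obtain ⟨hn0, hh, hB2, hB1⟩ := n_facts hn
  apply integrable_of_bound (((continuous_gpot l _).measurable).comp
    ((measurable_simQ t).comp hW)) (2 * Real.exp l)
  intro ω
  obtain ⟨h0, h1⟩ := simQ_range (f := f) (i := i) (γ := γ) hn hμ hk t (W ω)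
  show |gpot l (1 - 1/(n:ℝ)) (simQ n μ f i γ t (W ω))| ≤ 2 * Real.exp l
  rw [abs_of_pos (gpot_pos _ _ _)]
  exact gpot_bound hl hB2 hB1 h0 h1

lemma Ebound (hn : 2 ≤ n) (hμ : 0 < μ) {k : ℕ}
    (hk : (1 / 2 : ℝ) - 1 / (n : ℝ) = (k : ℝ) / μ)
    (hf : WeaklyPrefersOne f i) (hγ : 0 < γ) (hγn : 1/(n:ℝ) ≤ 1/2 - γ)
    {l : ℝ} (hl : 0 ≤ l)
    (hum : ∀ c, Measurable (u c))
    (huU : ∀ c, P.map (u c) = MeasureTheory.volume.restrict (Set.Icc (0:ℝ) 1))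
    (huI : iIndepFun (m := fun _ : Idx n => (inferInstance : MeasurableSpace ℝ)) u P)
    (T : ℕ) :
    ∫ ω, gpot l (1 - 1/(n:ℝ)) (simQ n μ f i γ T (fun c => u c ω)) ∂P
      ≤ 2 * Real.cosh (l * (1/μ)) ^ T := by
  obtain ⟨hn0, hh, hB2, hB1⟩ := n_facts hn
  have hU : Measurable (fun ω => (fun c : Idx n => u c ω)) := measurable_pi_lambda _ hum
  have hcosh := Real.one_le_cosh (l * (1/μ))
  induction T with
  | zero =>
    have : (fun ω => gpot l (1 - 1/(n:ℝ)) (simQ n μ f i γ 0 (fun c => u c ω)))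
        = fun _ => gpot l (1 - 1/(n:ℝ)) (1/2) := rfl
    rw [this, integral_const, probReal_univ]
    simp only [ENNReal.toReal_one, one_smul, pow_zero, mul_one]
    unfold gpot
    rw [show -(l*((1:ℝ)/2-1/2)) = 0 by ring, Real.exp_zero]
    have : Real.exp (-(l*(2*(1 - 1/(n:ℝ)) - 1/2 - 1/2))) ≤ 1 := by
      rw [Real.exp_le_one_iff]
      nlinarith
    linarith
  | succ T ih =>
    set H : (Idx n → ℝ) → ℝ := fun v => gpot l (1 - 1/(n:ℝ)) (simQ n μ f i γ (T+1) v)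
      with hHdef
    have hH : Measurable H :=
      ((continuous_gpot l _).measurable).comp (measurable_simQ (T+1))
    have hswap : ∫ ω, H ((fun c => u c ω) ∘ ⇑(swp n i T)) ∂P
        = ∫ ω, H (fun c => u c ω) ∂P := integral_swap hum huU huI (swp n i T) hH
    have hint1 : Integrable (fun ω => H (fun c => u c ω)) P :=
      gpot_simQ_integrable hn hμ hk hl hum hU (T+1)
    have hWs : Measurable (fun ω => ((fun c : Idx n => u c ω) ∘ ⇑(swp n i T))) :=
      measurable_pi_lambda _ (fun c => hum _)
    have hint2 : Integrable (fun ω => H ((fun c => u c ω) ∘ ⇑(swp n i T))) P :=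
      gpot_simQ_integrable hn hμ hk hl hum hWs (T+1)
    have hint0 : Integrable
        (fun ω => gpot l (1 - 1/(n:ℝ)) (simQ n μ f i γ T (fun c => u c ω))) P :=
      gpot_simQ_integrable hn hμ hk hl hum hU T
    have hdouble : (2:ℝ) * ∫ ω, H (fun c => u c ω) ∂P
        = ∫ ω, (H (fun c => u c ω) + H ((fun c => u c ω) ∘ ⇑(swp n i T))) ∂P := by
      rw [integral_add hint1 hint2, hswap]
      ring
    have hpoint : ∀ ω, H (fun c => u c ω) + H ((fun c => u c ω) ∘ ⇑(swp n i T))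
        ≤ 2 * Real.cosh (l * (1/μ))
            * gpot l (1 - 1/(n:ℝ)) (simQ n μ f i γ T (fun c => u c ω)) :=
      fun ω => step_pair hn hμ hk hf hγ hγn hl T (fun c => u c ω)
    have hmono : (2:ℝ) * ∫ ω, H (fun c => u c ω) ∂P
        ≤ 2 * Real.cosh (l * (1/μ))
            * ∫ ω, gpot l (1 - 1/(n:ℝ)) (simQ n μ f i γ T (fun c => u c ω)) ∂P := by
      rw [hdouble, show 2 * Real.cosh (l * (1/μ))
            * ∫ ω, gpot l (1 - 1/(n:ℝ)) (simQ n μ f i γ T (fun c => u c ω)) ∂P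
          = ∫ ω, 2 * Real.cosh (l * (1/μ))
            * gpot l (1 - 1/(n:ℝ)) (simQ n μ f i γ T (fun c => u c ω)) ∂P
          from (integral_const_mul _ _).symm]
      exact integral_mono (hint1.add hint2) (hint0.const_mul _) hpoint
    have : ∫ ω, H (fun c => u c ω) ∂P
        ≤ Real.cosh (l * (1/μ))
            * ∫ ω, gpot l (1 - 1/(n:ℝ)) (simQ n μ f i γ T (fun c => u c ω)) ∂P := by
      linarith
    calc ∫ ω, H (fun c => u c ω) ∂P
        ≤ Real.cosh (l * (1/μ))
            * ∫ ω, gpot l (1 - 1/(n:ℝ)) (simQ n μ f i γ T (fun c => u c ω)) ∂P := this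
      _ ≤ Real.cosh (l * (1/μ)) * (2 * Real.cosh (l * (1/μ)) ^ T) :=
          mul_le_mul_of_nonneg_left ih (by linarith)
      _ = 2 * Real.cosh (l * (1/μ)) ^ (T+1) := by ring

lemma markov_bound (hn : 2 ≤ n) (hμ : 0 < μ) {k : ℕ}
    (hk : (1 / 2 : ℝ) - 1 / (n : ℝ) = (k : ℝ) / μ)
    (hf : WeaklyPrefersOne f i) (hγ : 0 < γ) (hγn : 1/(n:ℝ) ≤ 1/2 - γ)
    {l : ℝ} (hl : 0 ≤ l)
    (hum : ∀ c, Measurable (u c))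
    (huU : ∀ c, P.map (u c) = MeasureTheory.volume.restrict (Set.Icc (0:ℝ) 1))
    (huI : iIndepFun (m := fun _ : Idx n => (inferInstance : MeasurableSpace ℝ)) u P)
    (T : ℕ) :
    (P {ω | simQ n μ f i γ T (fun c => u c ω) ≤ 1/2 - γ}).toReal
      ≤ Real.exp (-(l*γ)) * (2 * Real.cosh (l*(1/μ)) ^ T) := by
  have hU : Measurable (fun ω => (fun c : Idx n => u c ω)) := measurable_pi_lambda _ hum
  set Ebad := {ω | simQ n μ f i γ T (fun c => u c ω) ≤ 1/2 - γ} with hEdef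
  have hEm : MeasurableSet Ebad :=
    measurableSet_le ((measurable_simQ T).comp hU) measurable_const
  have hgE : ∀ ω ∈ Ebad, Real.exp (l*γ)
      ≤ gpot l (1 - 1/(n:ℝ)) (simQ n μ f i γ T (fun c => u c ω)) := by
    intro ω hω
    have hq : simQ n μ f i γ T (fun c => u c ω) ≤ 1/2 - γ := hω
    unfold gpot
    have h1 : Real.exp (l*γ)
        ≤ Real.exp (-(l*(simQ n μ f i γ T (fun c => u c ω) - 1/2))) := by
      apply Real.exp_le_exp.mpr
      nlinarith
    have h2 := Real.exp_pos (-(l*(2*(1 - 1/(n:ℝ)) - simQ n μ f i γ T (fun c => u c ω) - 1/2)))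
    linarith
  have hkey : (P Ebad).toReal * Real.exp (l*γ)
      ≤ ∫ ω, gpot l (1 - 1/(n:ℝ)) (simQ n μ f i γ T (fun c => u c ω)) ∂P := by
    have h1 : (P Ebad).toReal * Real.exp (l*γ)
        = ∫ ω, Set.indicator Ebad (fun _ => Real.exp (l*γ)) ω ∂P := by
      rw [integral_indicator_const _ hEm]
      simp [smul_eq_mul, mul_comm, Measure.real]
    rw [h1]
    apply integral_mono ((integrable_const _).indicator hEm)
      (gpot_simQ_integrable hn hμ hk hl hum hU T)
    intro ω
    by_cases hω : ω ∈ Ebad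
    · rw [Set.indicator_of_mem hω]
      exact hgE ω hω
    · rw [Set.indicator_of_notMem hω]
      exact le_of_lt (gpot_pos _ _ _)
  have hE := Ebound hn hμ hk hf hγ hγn hl hum huU huI T
  have hexp := Real.exp_pos (l*γ)
  rw [Real.exp_neg, inv_mul_eq_div, le_div_iff₀ hexp]
  linarith

end Main

end CGADrift


/-- genetic-drift bound for the cGA.  If a fitness function `f`
weakly prefers 1s over 0s at position `i`, then for all `γ > 0` and `T : ℕ`, with
probability at least `1 - 2 exp (-γ² μ² / (2T))` the frequency at position `i`
stays above `1/2 - γ` during the first `T` iterations. -/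


theorem cga_genetic_drift
    (n : ℕ) (μ : ℝ) (hwb : WellBehaved n μ)
    (f : (Fin n → Bool) → ℝ) (i : Fin n) (hf : WeaklyPrefersOne f i)
    (A : CGA n μ f (fun _ => 1 / 2)) (γ : ℝ) (hγ : 0 < γ) (T : ℕ) :
    (A.P {ω | ∀ t : ℕ, t ≤ T → A.p t ω i > 1 / 2 - γ}).toReal ≥
      1 - 2 * Real.exp (-(γ ^ 2 * μ ^ 2) / (2 * T)) := by
  classical
  letI : MeasurableSpace A.Omega := A.measSpace
  haveI : MeasureTheory.IsProbabilityMeasure A.P := A.isProb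
  rcases Nat.eq_zero_or_pos n with rfl | hn1
  · exact i.elim0
  have hγ2 : (1:ℝ)/2 - γ < 1/2 := by linarith
  have hexp0 := Real.exp_pos (-(γ ^ 2 * μ ^ 2) / (2 * (T:ℕ)))
  have hn0 : (0:ℝ) < n := by exact_mod_cast hn1
  -- the agreement between the run and the simulation
  have hagree : ∀ t ω j, A.p t ω j
      = CGADrift.simP n μ f t (fun c => A.u c.1 c.2.1 c.2.2 ω) j := by
    intro t
    induction t with
    | zero => intro ω j; rw [A.hp0]; rfl
    | succ t ih =>
      intro ω j
      rw [A.hupdate]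
      have hx : ∀ k : Fin 2, A.x k t ω
          = CGADrift.bits n (CGADrift.simP n μ f t (fun c => A.u c.1 c.2.1 c.2.2 ω)) k t
              (fun c => A.u c.1 c.2.1 c.2.2 ω) := by
        intro k; funext j'
        rw [A.hx, ih ω j']
        rfl
      rw [ih ω j, hx 0, hx 1]
      rfl
  by_cases hsmall : (1:ℝ)/2 - γ < 1/(n:ℝ)
  · -- the frequency never leaves `[1/n, 1-1/n] ∋ 1/2`, both above `1/2 - γ`
    have hall : ∀ t ω, (1:ℝ)/2 - γ < A.p t ω i := by
      intro t
      induction t with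
      | zero => intro ω; rw [A.hp0]; exact hγ2
      | succ t _ =>
        intro ω
        rw [A.hupdate]
        exact lt_of_lt_of_le hsmall (le_max_left _ _)
    have huniv : {ω | ∀ t : ℕ, t ≤ T → A.p t ω i > 1 / 2 - γ} = Set.univ :=
      Set.eq_univ_iff_forall.mpr (fun ω t _ => hall t ω)
    rw [huniv]
    simp only [MeasureTheory.measure_univ, ENNReal.toReal_one, ge_iff_le]
    linarith
  · push_neg at hsmall
    have hnn : (1:ℝ)/(n:ℝ) < 1/2 := lt_of_le_of_lt hsmall hγ2
    have hn2 : 2 ≤ n := by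
      by_contra h
      push_neg at h
      interval_cases n <;> norm_num at hnn
    obtain ⟨hμ0, kk, hkk⟩ := hwb
    rcases Nat.eq_zero_or_pos T with rfl | hT1
    · have : (1:ℝ) - 2 * Real.exp (-(γ ^ 2 * μ ^ 2) / (2 * ((0:ℕ):ℝ))) = -1 := by
        norm_num
      rw [this]
      have := ENNReal.toReal_nonneg (a := A.P {ω | ∀ t : ℕ, t ≤ 0 → A.p t ω i > 1 / 2 - γ})
      linarith
    -- main case
    have hT0 : (0:ℝ) < (T:ℝ) := by exact_mod_cast hT1
    set l : ℝ := γ * μ^2 / T with hldef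
    have hl : 0 ≤ l := by positivity
    set v : A.Omega → CGADrift.Idx n → ℝ := fun ω c => A.u c.1 c.2.1 c.2.2 ω with hvdef
    have hum : ∀ c : CGADrift.Idx n, Measurable (fun ω => v ω c) :=
      fun c => A.uMeas c.1 c.2.1 c.2.2
    have hU : Measurable v := measurable_pi_lambda _ hum
    -- the event identity
    have hset : {ω | ∀ t : ℕ, t ≤ T → A.p t ω i > 1 / 2 - γ}
        = {ω | CGADrift.simQ n μ f i γ T (v ω) ≤ 1/2 - γ}ᶜ := by
      ext ω
      simp only [Set.mem_setOf_eq, Set.mem_compl_iff, not_le]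
      constructor
      · intro h
        apply CGADrift.simQ_ge
        intro s hs
        have := h s hs
        rwa [hagree s ω i] at this
      · intro h t ht
        have := (CGADrift.simQ_gt hγ T (v ω) h).2 t ht
        rwa [hagree t ω i]
    have hEm : MeasurableSet {ω | CGADrift.simQ n μ f i γ T (v ω) ≤ 1/2 - γ} :=
      measurableSet_le ((CGADrift.measurable_simQ T).comp hU) measurable_const
    rw [hset]
    have hcompl : A.P {ω | CGADrift.simQ n μ f i γ T (v ω) ≤ 1/2 - γ}ᶜ
        = 1 - A.P {ω | CGADrift.simQ n μ f i γ T (v ω) ≤ 1/2 - γ} :=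
      MeasureTheory.prob_compl_eq_one_sub hEm
    rw [hcompl, ENNReal.toReal_sub_of_le MeasureTheory.prob_le_one ENNReal.one_ne_top,
      ENNReal.toReal_one, ge_iff_le, sub_le_sub_iff_left]
    -- it remains to bound the bad probability
    have hmb := CGADrift.markov_bound (P := A.P) (u := fun c ω => v ω c)
      hn2 hμ0 hkk hf hγ hsmall hl hum
      (fun c => A.uUnif c.1 c.2.1 c.2.2) A.uIndep T
    have hch := Real.cosh_le_exp_half_sq (l*(1/μ))
    have hpow : Real.cosh (l*(1/μ)) ^ T ≤ Real.exp ((l*(1/μ))^2/2) ^ T :=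
      pow_le_pow_left₀ (Real.cosh_pos _).le hch T
    have hexpT : Real.exp ((l*(1/μ))^2/2) ^ T = Real.exp ((T:ℝ) * ((l*(1/μ))^2/2)) :=
      (Real.exp_nat_mul _ T).symm
    have harith : (T:ℝ) * ((l*(1/μ))^2/2) + -(l*γ) = -(γ ^ 2 * μ ^ 2) / (2 * (T:ℝ)) := by
      rw [hldef]
      field_simp
      ring
    have hfinal : Real.exp (-(l*γ)) * (2 * Real.cosh (l*(1/μ)) ^ T)
        ≤ 2 * Real.exp (-(γ ^ 2 * μ ^ 2) / (2 * (T:ℝ))) := by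
      have h1 : Real.exp (-(l*γ)) * (2 * Real.cosh (l*(1/μ)) ^ T)
          ≤ Real.exp (-(l*γ)) * (2 * Real.exp ((T:ℝ) * ((l*(1/μ))^2/2))) := by
        have := Real.exp_pos (-(l*γ))
        rw [← hexpT]
        nlinarith
      have h2 : Real.exp (-(l*γ)) * (2 * Real.exp ((T:ℝ) * ((l*(1/μ))^2/2)))
          = 2 * Real.exp ((T:ℝ) * ((l*(1/μ))^2/2) + -(l*γ)) := by
        rw [Real.exp_add]
        ring
      rw [h2, harith] at h1
      exact h1
    calc (A.P {ω | CGADrift.simQ n μ f i γ T (v ω) ≤ 1/2 - γ}).toReal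
        ≤ Real.exp (-(l*γ)) * (2 * Real.cosh (l*(1/μ)) ^ T) := hmb
      _ ≤ 2 * Real.exp (-(γ ^ 2 * μ ^ 2) / (2 * (T:ℝ))) := hfinal
end

section
/- Consider one iteration of the cGA with well-behaved hypothetical population size μ > 0 maximizing LeadingOnes on bit strings of length n, started from a frequency vector p with 1/n + 1/μ ≤ p_{i+1} ≤ 1 − 1/n − 1/μ for some i ∈ [0 .. n − 1] (so no border capping occurs at position i + 1). Then the expected one-step change of the frequency at position i + 1 satisfies E[p_{i+1}^{(t+1)} − p_{i+1}^{(t)} | p^{(t)} = p] = (2/μ) · (∏_{j=1}^{i} p_j^2) · p_{i+1} · (1 − p_{i+1}). -/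
lemma leadingOnes_nonneg {n : ℕ} (x : Fin n → Bool) : 0 ≤ leadingOnes x := by
  unfold leadingOnes; positivity

lemma leadingOnes_le {n : ℕ} (c : Fin n → Bool) (J : Fin n) (h : c J = false) :
    leadingOnes c ≤ ((J : ℕ) : ℝ) := by
  unfold leadingOnes
  have hsub : (Finset.univ : Finset (Fin n)).filter (fun i => ∀ j ≤ i, c j = true)
      ⊆ Finset.Iio J := by
    intro j hj
    simp only [Finset.mem_filter, Finset.mem_univ, true_and] at hj
    simp only [Finset.mem_Iio]
    by_contra hcon
    push_neg at hcon
    have := hj J hcon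
    rw [h] at this; exact Bool.false_ne_true this
  calc ((Finset.filter _ Finset.univ).card : ℝ) ≤ ((Finset.Iio J).card : ℝ) := by
        exact_mod_cast Finset.card_le_card hsub
    _ = ((J : ℕ) : ℝ) := by rw [Fin.card_Iio]

lemma leadingOnes_ge {n : ℕ} (c : Fin n → Bool) (J : Fin n) (h : ∀ j ≤ J, c j = true) :
    (((J : ℕ) : ℝ) + 1) ≤ leadingOnes c := by
  unfold leadingOnes
  have hsub : Finset.Iic J ⊆
      (Finset.univ : Finset (Fin n)).filter (fun i => ∀ j ≤ i, c j = true) := by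
    intro j hj
    simp only [Finset.mem_Iic] at hj
    simp only [Finset.mem_filter, Finset.mem_univ, true_and]
    exact fun j' hj' => h j' (le_trans hj' hj)
  calc (((J : ℕ) : ℝ) + 1) = ((Finset.Iic J).card : ℝ) := by rw [Fin.card_Iic]; push_cast; ring
    _ ≤ _ := by exact_mod_cast Finset.card_le_card hsub

lemma leadingOnes_congr {n : ℕ} (b c : Fin n → Bool) (j0 : Fin n) (hb : b j0 = false)
    (hc : c j0 = false) (h : ∀ j < j0, b j = c j) : leadingOnes b = leadingOnes c := by
  unfold leadingOnes
  congr 1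
  apply congrArg
  apply Finset.filter_congr
  intro j _
  by_cases hj : j < j0
  · constructor <;> intro H j' hj'
    · rw [← h j' (lt_of_le_of_lt hj' hj)]; exact H j' hj'
    · rw [h j' (lt_of_le_of_lt hj' hj)]; exact H j' hj'
  · push_neg at hj
    constructor <;> intro H
    · exfalso; have := H j0 hj; rw [hb] at this; exact Bool.false_ne_true this
    · exfalso; have := H j0 hj; rw [hc] at this; exact Bool.false_ne_true this

lemma leadingOnes_trunc {n i : ℕ} (hin : i ≤ n) (b : Fin 2 → Fin n → Bool)
    (hA : ¬ ∀ (k : Fin 2) (j : Fin n), (j : ℕ) < i → b k j = true) :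
    (leadingOnes (b 0) ≥ leadingOnes (b 1) ↔
      leadingOnes (fun j => if (j : ℕ) < i then b 0 j else false) ≥
        leadingOnes (fun j => if (j : ℕ) < i then b 1 j else false)) := by
  set τ : Fin 2 → Fin n → Bool := fun k j => if (j : ℕ) < i then b k j else false with hτ
  show leadingOnes (b 0) ≥ leadingOnes (b 1) ↔ leadingOnes (τ 0) ≥ leadingOnes (τ 1)
  have hcase : ∀ k : Fin 2, (∀ j : Fin n, (j : ℕ) < i → b k j = true) ∨
      ∃ j0 : Fin n, (j0 : ℕ) < i ∧ b k j0 = false := by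
    intro k
    by_cases hk : ∀ j : Fin n, (j : ℕ) < i → b k j = true
    · exact Or.inl hk
    · right; push_neg at hk
      obtain ⟨j0, hj0, hbj0⟩ := hk
      exact ⟨j0, hj0, by simpa using hbj0⟩
  have hEq : ∀ (k : Fin 2) (j0 : Fin n), (j0 : ℕ) < i → b k j0 = false →
      leadingOnes (b k) = leadingOnes (τ k) := by
    intro k j0 hj0 hb0
    refine leadingOnes_congr _ _ j0 hb0 (by simp only [hτ]; rw [if_pos hj0]; exact hb0) ?_
    intro j hj
    have hji : (j : ℕ) < i := lt_trans (Fin.lt_def.mp hj) hj0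
    simp only [hτ]; rw [if_pos hji]
  -- upper bound for a sample with a zero below i
  have hLe : ∀ (c : Fin n → Bool) (j0 : Fin n), c j0 = false → leadingOnes c ≤ ((j0 : ℕ) : ℝ) :=
    fun c j0 h => leadingOnes_le c j0 h
  -- lower bound i for a sample that is all ones below i (needs 1 ≤ i)
  have hGe : ∀ (c : Fin n → Bool), 1 ≤ i → (∀ j : Fin n, (j : ℕ) < i → c j = true) →
      (i : ℝ) ≤ leadingOnes c := by
    intro c h1 hc
    have hin' : i - 1 < n := by omega
    have := leadingOnes_ge c ⟨i - 1, hin'⟩ (fun j hj => hc j (by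
      have := Fin.le_def.mp hj; simp at this ⊢; omega))
    have hcast : (((⟨i - 1, hin'⟩ : Fin n) : ℕ) : ℝ) + 1 = (i : ℝ) := by
      simp only [Fin.val_mk]
      rw [Nat.cast_sub h1]; push_cast; ring
    linarith [this, hcast.le]
  have hτall : ∀ k : Fin 2, (∀ j : Fin n, (j : ℕ) < i → b k j = true) →
      (∀ j : Fin n, (j : ℕ) < i → τ k j = true) := by
    intro k hk j hj; simp only [hτ]; rw [if_pos hj]; exact hk j hj
  rcases hcase 0 with h0 | ⟨j0, hj0, hb0⟩
  · rcases hcase 1 with h1 | ⟨j1, hj1, hb1⟩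
    · exact absurd (fun k => by fin_cases k <;> assumption) hA
    · -- sample 0 all ones below i, sample 1 has a zero
      have h1i : 1 ≤ i := by omega
      have hcast : ((j1 : ℕ) : ℝ) < (i : ℝ) := by exact_mod_cast hj1
      have e1 := hEq 1 j1 hj1 hb1
      have u1 : leadingOnes (b 1) ≤ ((j1 : ℕ) : ℝ) := hLe _ j1 hb1
      have uτ1 : leadingOnes (τ 1) ≤ ((j1 : ℕ) : ℝ) := e1 ▸ u1
      have l0 : (i : ℝ) ≤ leadingOnes (b 0) := hGe _ h1i h0
      have lτ0 : (i : ℝ) ≤ leadingOnes (τ 0) := hGe _ h1i (hτall 0 h0)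
      exact iff_of_true (by linarith) (by linarith)
  · rcases hcase 1 with h1 | ⟨j1, hj1, hb1⟩
    · -- sample 0 has a zero below i, sample 1 all ones below i
      have h1i : 1 ≤ i := by omega
      have hcast : ((j0 : ℕ) : ℝ) < (i : ℝ) := by exact_mod_cast hj0
      have e0 := hEq 0 j0 hj0 hb0
      have u0 : leadingOnes (b 0) ≤ ((j0 : ℕ) : ℝ) := hLe _ j0 hb0
      have uτ0 : leadingOnes (τ 0) ≤ ((j0 : ℕ) : ℝ) := e0 ▸ u0
      have l1 : (i : ℝ) ≤ leadingOnes (b 1) := hGe _ h1i h1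
      have lτ1 : (i : ℝ) ≤ leadingOnes (τ 1) := hGe _ h1i (hτall 1 h1)
      exact iff_of_false (by push_neg; linarith) (by push_neg; linarith)
    · rw [hEq 0 j0 hj0 hb0, hEq 1 j1 hj1 hb1]

/-- positions strictly below `i`, for both samples, at iteration 0 -/
def blkT1 (n i : ℕ) : Finset (Fin 2 × ℕ × Fin n) :=
  Finset.univ ×ˢ ({0} ×ˢ Finset.univ.filter (fun j : Fin n => (j : ℕ) < i))

lemma mem_blkT1 {n i : ℕ} (a : Fin 2 × ℕ × Fin n) :
    a ∈ blkT1 n i ↔ a.2.1 = 0 ∧ (a.2.2 : ℕ) < i := by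
  obtain ⟨k, t, j⟩ := a
  simp only [blkT1, Finset.mem_product, Finset.mem_univ, Finset.mem_singleton,
    Finset.mem_filter, true_and]

/-- the two coordinates at position `I`, iteration 0 -/
def blkT2 {n : ℕ} (I : Fin n) : Finset (Fin 2 × ℕ × Fin n) :=
  {(0, 0, I), (1, 0, I)}

lemma mem_blkT2 {n : ℕ} (I : Fin n) (k : Fin 2) : (k, 0, I) ∈ blkT2 I := by
  fin_cases k <;> simp [blkT2]

/-- truncated bits computed from the first block of uniforms -/
noncomputable def tbit {n : ℕ} (i : ℕ) (p0 : Fin n → ℝ) (v : ↥(blkT1 n i) → ℝ)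
    (k : Fin 2) (j : Fin n) : Bool :=
  if h : (k, 0, j) ∈ blkT1 n i then decide (v ⟨(k, 0, j), h⟩ < p0 j) else false

noncomputable def F1 {n : ℕ} (i : ℕ) (p0 : Fin n → ℝ) (v : ↥(blkT1 n i) → ℝ) : ℝ :=
  if ∀ (k : Fin 2) (j : Fin n), (j : ℕ) < i → tbit i p0 v k j = true then 1 else 0

noncomputable def F2 {n : ℕ} (i : ℕ) (p0 : Fin n → ℝ) (v : ↥(blkT1 n i) → ℝ) : ℝ :=
  if ∀ (k : Fin 2) (j : Fin n), (j : ℕ) < i → tbit i p0 v k j = true then 0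
  else if leadingOnes (tbit i p0 v 0) ≥ leadingOnes (tbit i p0 v 1) then 1 else -1

noncomputable def qv {n : ℕ} (I : Fin n) (v : ↥(blkT2 I) → ℝ) (k : Fin 2) : ℝ :=
  v ⟨(k, 0, I), mem_blkT2 I k⟩

noncomputable def G2 {n : ℕ} (I : Fin n) (p : ℝ) (v : ↥(blkT2 I) → ℝ) : ℝ :=
  (if qv I v 0 < p then 1 else 0) - (if qv I v 1 < p then 1 else 0)

noncomputable def G1 {n : ℕ} (I : Fin n) (p : ℝ) (v : ↥(blkT2 I) → ℝ) : ℝ :=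
  (G2 I p v) ^ 2

lemma measurable_tbit {n : ℕ} (i : ℕ) (p0 : Fin n → ℝ) :
    Measurable (fun v => tbit i p0 v) := by
  apply measurable_pi_lambda
  intro k
  apply measurable_pi_lambda
  intro j
  by_cases h : (k, 0, j) ∈ blkT1 n i
  · simp only [tbit, dif_pos h]
    have : Measurable fun r : ℝ => decide (r < p0 j) := by
      apply measurable_to_countable'
      intro y
      cases y
      · convert measurableSet_Ici (a := p0 j) using 1
        ext r; simp
      · convert measurableSet_Iio (a := p0 j) using 1
        ext r; simp
    exact this.comp (measurable_pi_apply _)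
  · simp only [tbit, dif_neg h]
    exact measurable_const

lemma measurable_F1 {n : ℕ} (i : ℕ) (p0 : Fin n → ℝ) : Measurable (F1 i p0) := by
  have : F1 i p0 = (fun c : Fin 2 → Fin n → Bool =>
      if ∀ (k : Fin 2) (j : Fin n), (j : ℕ) < i → c k j = true then (1 : ℝ) else 0) ∘
      (fun v => tbit i p0 v) := rfl
  rw [this]
  exact (measurable_of_finite _).comp (measurable_tbit i p0)

lemma measurable_F2 {n : ℕ} (i : ℕ) (p0 : Fin n → ℝ) : Measurable (F2 i p0) := by
  have : F2 i p0 = (fun c : Fin 2 → Fin n → Bool =>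
      if ∀ (k : Fin 2) (j : Fin n), (j : ℕ) < i → c k j = true then (0 : ℝ)
      else if leadingOnes (c 0) ≥ leadingOnes (c 1) then 1 else -1) ∘
      (fun v => tbit i p0 v) := rfl
  rw [this]
  exact (measurable_of_finite _).comp (measurable_tbit i p0)

lemma measurable_G2 {n : ℕ} (I : Fin n) (p : ℝ) : Measurable (G2 I p) := by
  apply Measurable.sub
  all_goals
    apply Measurable.ite _ measurable_const measurable_const
    exact (measurable_pi_apply _) measurableSet_Iio

lemma measurable_G1 {n : ℕ} (I : Fin n) (p : ℝ) : Measurable (G1 I p) :=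
  (measurable_G2 I p).pow measurable_const

/-- expected one-step change of a frequency.  Consider one
iteration of the cGA on LeadingOnes started from a frequency vector `p0` with
`1/n + 1/μ ≤ p0 (i+1) ≤ 1 - 1/n - 1/μ` at the (1-indexed) position `i + 1`, for
`i ∈ [0..n-1]` (so no border capping occurs there).  Then the expected one-step
change of the frequency at position `i + 1` equals
`(2/μ) ⬝ (∏_{j=1}^{i} p0_j²) ⬝ p0_{i+1} ⬝ (1 - p0_{i+1})`. -/
theorem cga_leadingOnes_expected_one_step_change
    (n : ℕ) (hn : 1 ≤ n) (μ : ℝ) (hwb : WellBehaved n μ)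
    (p0 : Fin n → ℝ) (hbox : ∀ j : Fin n, 1 / (n : ℝ) ≤ p0 j ∧ p0 j ≤ 1 - 1 / n)
    (i : ℕ) (hi : i ≤ n - 1)
    (hlow : 1 / (n : ℝ) + 1 / μ ≤ p0 ⟨i, by omega⟩)
    (hhigh : p0 ⟨i, by omega⟩ ≤ 1 - 1 / (n : ℝ) - 1 / μ)
    (A : CGA n μ leadingOnes p0) :
    (∫ ω, (A.p 1 ω ⟨i, by omega⟩ - A.p 0 ω ⟨i, by omega⟩) ∂A.P) =
      (2 / μ) * (∏ j ∈ Finset.univ.filter (fun j : Fin n => (j : ℕ) < i), (p0 j) ^ 2)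
        * p0 ⟨i, by omega⟩ * (1 - p0 ⟨i, by omega⟩) := by
  classical
  obtain ⟨hμ0, -⟩ := hwb
  have hin : i < n := by omega
  letI : MeasurableSpace A.Omega := A.measSpace
  haveI : MeasureTheory.IsProbabilityMeasure A.P := A.isProb
  set I : Fin n := ⟨i, hin⟩ with hIdef
  have hlow' : 1 / (n : ℝ) + 1 / μ ≤ p0 I := hlow
  have hhigh' : p0 I ≤ 1 - 1 / (n : ℝ) - 1 / μ := hhigh
  have hn1 : (1 : ℝ) ≤ (n : ℝ) := by exact_mod_cast hn
  have hn0 : (0 : ℝ) < (n : ℝ) := by linarith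
  have hinvn : (0 : ℝ) < 1 / (n : ℝ) := by positivity
  have hμpos : (0 : ℝ) < 1 / μ := by positivity
  have hp01 : ∀ j : Fin n, 0 ≤ p0 j ∧ p0 j ≤ 1 := fun j =>
    ⟨le_trans hinvn.le (hbox j).1, le_trans (hbox j).2 (by linarith)⟩
  -- the two blocks of uniform random variables
  set B1 : A.Omega → (↥(blkT1 n i) → ℝ) :=
    fun ω a => A.u (a : Fin 2 × ℕ × Fin n).1 (a : Fin 2 × ℕ × Fin n).2.1
      (a : Fin 2 × ℕ × Fin n).2.2 ω with hB1def
  set B2 : A.Omega → (↥(blkT2 I) → ℝ) :=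
    fun ω a => A.u (a : Fin 2 × ℕ × Fin n).1 (a : Fin 2 × ℕ × Fin n).2.1
      (a : Fin 2 × ℕ × Fin n).2.2 ω with hB2def
  -- pointwise identity for the one-step change
  have hgoal : ∀ ω, A.p 1 ω I - A.p 0 ω I =
      (1 / μ) * (F1 i p0 (B1 ω) * G1 I (p0 I) (B2 ω) + F2 i p0 (B1 ω) * G2 I (p0 I) (B2 ω)) := by
    intro ω
    have hx' : ∀ (k : Fin 2) (j : Fin n), A.x k 0 ω j = decide (A.u k 0 j ω < p0 j) := by
      intro k j; rw [A.hx, A.hp0]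
    -- the raw step
    set SS : ℝ := if leadingOnes (A.x 0 0 ω) ≥ leadingOnes (A.x 1 0 ω)
        then ((A.x 0 0 ω I).toNat : ℝ) - ((A.x 1 0 ω I).toNat : ℝ)
        else ((A.x 1 0 ω I).toNat : ℝ) - ((A.x 0 0 ω I).toNat : ℝ) with hSSdef
    have hSS : -1 ≤ SS ∧ SS ≤ 1 := by
      rw [hSSdef]
      cases h0 : A.x 0 0 ω I <;> cases h1 : A.x 1 0 ω I <;>
        split_ifs <;> norm_num
    have hstep : A.p 1 ω I - A.p 0 ω I = (1 / μ) * SS := by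
      have hup := A.hupdate 0 ω I
      rw [A.hp0 ω I] at hup
      have h1 : p0 I + (1 / μ) * SS ≤ 1 - 1 / (n : ℝ) := by nlinarith [hSS.2, hμpos.le]
      have h2 : 1 / (n : ℝ) ≤ p0 I + (1 / μ) * SS := by nlinarith [hSS.1, hμpos.le]
      have : A.p 1 ω I = p0 I + (1 / μ) * SS := by
        rw [hup]
        show capFreq n (p0 I + 1 / μ * SS) = _
        unfold capFreq
        rw [min_eq_right h1, max_eq_right h2]
      rw [this, A.hp0 ω I]; ring
    rw [hstep]
    congr 1
    -- identify the truncated bits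
    have h_tbit : ∀ (k : Fin 2) (j : Fin n),
        tbit i p0 (B1 ω) k j = if (j : ℕ) < i then A.x k 0 ω j else false := by
      intro k j
      by_cases hj : (j : ℕ) < i
      · have hm : ((k, 0, j) : Fin 2 × ℕ × Fin n) ∈ blkT1 n i := (mem_blkT1 _).mpr ⟨rfl, hj⟩
        rw [tbit, dif_pos hm, if_pos hj, hx']
      · rw [tbit, dif_neg (fun hm => hj ((mem_blkT1 _).mp hm).2), if_neg hj]
    have h_if : ∀ (k : Fin 2), (if A.u k 0 I ω < p0 I then (1:ℝ) else 0)
        = ((A.x k 0 ω I).toNat : ℝ) := by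
      intro k
      rw [hx']
      by_cases h : A.u k 0 I ω < p0 I <;> simp [h]
    have h_G2 : G2 I (p0 I) (B2 ω) = ((A.x 0 0 ω I).toNat : ℝ) - ((A.x 1 0 ω I).toNat : ℝ) := by
      rw [G2]
      show (if A.u 0 0 I ω < p0 I then (1:ℝ) else 0) - (if A.u 1 0 I ω < p0 I then (1:ℝ) else 0) = _
      rw [h_if 0, h_if 1]
    have h_G1 : G1 I (p0 I) (B2 ω)
        = (((A.x 0 0 ω I).toNat : ℝ) - ((A.x 1 0 ω I).toNat : ℝ)) ^ 2 := by
      rw [G1, h_G2]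
    by_cases hA : ∀ (k : Fin 2) (j : Fin n), (j : ℕ) < i → A.x k 0 ω j = true
    · have hA' : ∀ (k : Fin 2) (j : Fin n), (j : ℕ) < i → tbit i p0 (B1 ω) k j = true := by
        intro k j hj; rw [h_tbit, if_pos hj]; exact hA k j hj
      have hF1 : F1 i p0 (B1 ω) = 1 := by rw [F1, if_pos hA']
      have hF2 : F2 i p0 (B1 ω) = 0 := by rw [F2, if_pos hA']
      rw [hF1, hF2, h_G1, h_G2, hSSdef]
      cases h0 : A.x 0 0 ω I <;> cases h1 : A.x 1 0 ω I
      · split_ifs <;> norm_num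
      · have hle : leadingOnes (A.x 0 0 ω) ≤ ((I : ℕ) : ℝ) := leadingOnes_le _ I h0
        have hge : (((I : ℕ) : ℝ) + 1) ≤ leadingOnes (A.x 1 0 ω) := by
          apply leadingOnes_ge _ I
          intro j hj
          rcases lt_or_eq_of_le hj with h | h
          · exact hA 1 j (Fin.lt_def.mp h)
          · rw [h]; exact h1
        rw [if_neg (by push_neg; linarith)]
        norm_num
      · have hle : leadingOnes (A.x 1 0 ω) ≤ ((I : ℕ) : ℝ) := leadingOnes_le _ I h1
        have hge : (((I : ℕ) : ℝ) + 1) ≤ leadingOnes (A.x 0 0 ω) := by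
          apply leadingOnes_ge _ I
          intro j hj
          rcases lt_or_eq_of_le hj with h | h
          · exact hA 0 j (Fin.lt_def.mp h)
          · rw [h]; exact h0
        rw [if_pos (by linarith)]
        norm_num
      · split_ifs <;> norm_num
    · have hA' : ¬ ∀ (k : Fin 2) (j : Fin n), (j : ℕ) < i → tbit i p0 (B1 ω) k j = true := by
        intro H; apply hA; intro k j hj
        have := H k j hj; rwa [h_tbit, if_pos hj] at this
      have hF1 : F1 i p0 (B1 ω) = 0 := by rw [F1, if_neg hA']
      have htr := leadingOnes_trunc (le_of_lt hin) (fun k => A.x k 0 ω) hA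
      have htb0 : tbit i p0 (B1 ω) 0 = fun j : Fin n => if (j : ℕ) < i then A.x 0 0 ω j else false :=
        funext fun j => h_tbit 0 j
      have htb1 : tbit i p0 (B1 ω) 1 = fun j : Fin n => if (j : ℕ) < i then A.x 1 0 ω j else false :=
        funext fun j => h_tbit 1 j
      have hF2 : F2 i p0 (B1 ω) =
          if leadingOnes (A.x 0 0 ω) ≥ leadingOnes (A.x 1 0 ω) then 1 else -1 := by
        rw [F2, if_neg hA', htb0, htb1]
        exact if_congr htr.symm rfl rfl
      rw [hF1, hF2, h_G2, hSSdef]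
      split_ifs <;> ring
  -- measurability of the blocks
  have hMB1 : Measurable B1 := measurable_pi_lambda _ (fun a => A.uMeas _ _ _)
  have hMB2 : Measurable B2 := measurable_pi_lambda _ (fun a => A.uMeas _ _ _)
  -- single-coordinate probabilities
  have hprob : ∀ (k : Fin 2) (tt : ℕ) (j : Fin n),
      A.P ((fun ω => A.u k tt j ω) ⁻¹' Set.Iio (p0 j)) = ENNReal.ofReal (p0 j) := by
    intro k tt j
    have hmeas := A.uMeas k tt j
    have heq : (fun ω => A.u k tt j ω) = A.u k tt j := rfl
    rw [heq, ← MeasureTheory.Measure.map_apply hmeas measurableSet_Iio, A.uUnif,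
      MeasureTheory.Measure.restrict_apply measurableSet_Iio]
    have hset : Set.Iio (p0 j) ∩ Set.Icc (0 : ℝ) 1 = Set.Ico 0 (p0 j) := by
      ext r
      simp only [Set.mem_inter_iff, Set.mem_Iio, Set.mem_Icc, Set.mem_Ico]
      constructor
      · rintro ⟨h1, h2, h3⟩; exact ⟨h2, h1⟩
      · rintro ⟨h1, h2⟩; exact ⟨h2, h1, by linarith [(hp01 j).2]⟩
    rw [hset, Real.volume_Ico, sub_zero]
  -- the bit indicators at position I
  have hpre_meas : ∀ k : Fin 2, MeasurableSet ((fun ω => A.u k 0 I ω) ⁻¹' Set.Iio (p0 I)) :=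
    fun k => (A.uMeas k 0 I) measurableSet_Iio
  have hind : ∀ k : Fin 2, (fun ω => if A.u k 0 I ω < p0 I then (1 : ℝ) else 0)
      = Set.indicator ((fun ω => A.u k 0 I ω) ⁻¹' Set.Iio (p0 I)) (fun _ => (1 : ℝ)) := by
    intro k; funext ω
    by_cases h : A.u k 0 I ω < p0 I <;>
      simp [Set.indicator_apply, Set.mem_preimage, Set.mem_Iio, h]
  have hIntInd : ∀ k : Fin 2,
      MeasureTheory.Integrable (fun ω => if A.u k 0 I ω < p0 I then (1 : ℝ) else 0) A.P := by
    intro k; rw [hind k]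
    exact (MeasureTheory.integrable_const 1).indicator (hpre_meas k)
  have hIt : ∀ k : Fin 2, ∫ ω, (if A.u k 0 I ω < p0 I then (1 : ℝ) else 0) ∂A.P = p0 I := by
    intro k
    rw [hind k, MeasureTheory.integral_indicator_const _ (hpre_meas k), MeasureTheory.measureReal_def, hprob k 0 I]
    simp [ENNReal.toReal_ofReal (hp01 I).1]
  -- product of the two bit indicators
  have hmulind : (fun ω => (if A.u 0 0 I ω < p0 I then (1 : ℝ) else 0) *
      (if A.u 1 0 I ω < p0 I then (1 : ℝ) else 0))
      = Set.indicator ((fun ω => A.u 0 0 I ω) ⁻¹' Set.Iio (p0 I) ∩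
          (fun ω => A.u 1 0 I ω) ⁻¹' Set.Iio (p0 I)) (fun _ => (1 : ℝ)) := by
    funext ω
    by_cases h0 : A.u 0 0 I ω < p0 I <;> by_cases h1 : A.u 1 0 I ω < p0 I <;>
      simp [Set.indicator_apply, Set.mem_inter_iff, Set.mem_preimage, Set.mem_Iio, h0, h1]
  have hind2 : ProbabilityTheory.IndepFun (fun ω => A.u 0 0 I ω) (fun ω => A.u 1 0 I ω) A.P := by
    have := A.uIndep.indepFun (i := ((0 : Fin 2), (0 : ℕ), I)) (j := ((1 : Fin 2), (0 : ℕ), I))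
      (by simp [Prod.ext_iff])
    exact this
  have hPmul : A.P ((fun ω => A.u 0 0 I ω) ⁻¹' Set.Iio (p0 I) ∩
      (fun ω => A.u 1 0 I ω) ⁻¹' Set.Iio (p0 I))
      = ENNReal.ofReal (p0 I) * ENNReal.ofReal (p0 I) := by
    rw [hind2.measure_inter_preimage_eq_mul _ _ measurableSet_Iio measurableSet_Iio,
      hprob 0 0 I, hprob 1 0 I]
  have hpre2_meas : MeasurableSet ((fun ω => A.u 0 0 I ω) ⁻¹' Set.Iio (p0 I) ∩
      (fun ω => A.u 1 0 I ω) ⁻¹' Set.Iio (p0 I)) := (hpre_meas 0).inter (hpre_meas 1)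
  have hIntMul : MeasureTheory.Integrable (fun ω => (if A.u 0 0 I ω < p0 I then (1 : ℝ) else 0) *
      (if A.u 1 0 I ω < p0 I then (1 : ℝ) else 0)) A.P := by
    rw [hmulind]
    exact (MeasureTheory.integrable_const 1).indicator hpre2_meas
  have hItmul : ∫ ω, ((if A.u 0 0 I ω < p0 I then (1 : ℝ) else 0) *
      (if A.u 1 0 I ω < p0 I then (1 : ℝ) else 0)) ∂A.P = p0 I * p0 I := by
    rw [hmulind, MeasureTheory.integral_indicator_const _ hpre2_meas, MeasureTheory.measureReal_def, hPmul]
    simp [ENNReal.toReal_mul, ENNReal.toReal_ofReal (hp01 I).1]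
  -- expectation of G2 ∘ B2 and G1 ∘ B2
  have hG2pt : (fun ω => G2 I (p0 I) (B2 ω)) = fun ω =>
      (if A.u 0 0 I ω < p0 I then (1 : ℝ) else 0) -
      (if A.u 1 0 I ω < p0 I then (1 : ℝ) else 0) := rfl
  have hY2 : ∫ ω, G2 I (p0 I) (B2 ω) ∂A.P = 0 := by
    rw [hG2pt, MeasureTheory.integral_sub (hIntInd 0) (hIntInd 1), hIt 0, hIt 1, sub_self]
  have hG1pt : (fun ω => G1 I (p0 I) (B2 ω)) = fun ω =>
      ((if A.u 0 0 I ω < p0 I then (1 : ℝ) else 0) +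
       (if A.u 1 0 I ω < p0 I then (1 : ℝ) else 0)) -
      2 * ((if A.u 0 0 I ω < p0 I then (1 : ℝ) else 0) *
        (if A.u 1 0 I ω < p0 I then (1 : ℝ) else 0)) := by
    funext ω
    show (G2 I (p0 I) (B2 ω)) ^ 2 = _
    have heq : G2 I (p0 I) (B2 ω) = (if A.u 0 0 I ω < p0 I then (1 : ℝ) else 0) -
        (if A.u 1 0 I ω < p0 I then (1 : ℝ) else 0) := rfl
    rw [heq]
    by_cases h0 : A.u 0 0 I ω < p0 I <;> by_cases h1 : A.u 1 0 I ω < p0 I <;>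
      simp [h0, h1] <;> ring
  have hY1 : ∫ ω, G1 I (p0 I) (B2 ω) ∂A.P = p0 I + p0 I - 2 * (p0 I * p0 I) := by
    have hIntAdd : MeasureTheory.Integrable (fun ω =>
        (if A.u 0 0 I ω < p0 I then (1 : ℝ) else 0) +
        (if A.u 1 0 I ω < p0 I then (1 : ℝ) else 0)) A.P := by
      exact (hIntInd 0).add (hIntInd 1)
    have hIntC : MeasureTheory.Integrable (fun ω =>
        2 * ((if A.u 0 0 I ω < p0 I then (1 : ℝ) else 0) *
          (if A.u 1 0 I ω < p0 I then (1 : ℝ) else 0))) A.P := by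
      exact hIntMul.const_mul 2
    rw [hG1pt, MeasureTheory.integral_sub hIntAdd hIntC,
      MeasureTheory.integral_add (hIntInd 0) (hIntInd 1), MeasureTheory.integral_const_mul 2,
      hIt 0, hIt 1, hItmul]
  -- expectation of F1 ∘ B1 : probability that all bits below i are one in both samples
  have hEmeas : MeasurableSet (⋂ a ∈ blkT1 n i,
      (fun ω => A.u a.1 a.2.1 a.2.2 ω) ⁻¹' Set.Iio (p0 a.2.2)) := by
    apply MeasurableSet.biInter ((blkT1 n i).countable_toSet)
    intro a _
    exact (A.uMeas _ _ _) measurableSet_Iio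
  have hF1pt : (fun ω => F1 i p0 (B1 ω)) = Set.indicator (⋂ a ∈ blkT1 n i,
      (fun ω => A.u a.1 a.2.1 a.2.2 ω) ⁻¹' Set.Iio (p0 a.2.2)) (fun _ => (1 : ℝ)) := by
    funext ω
    rw [Set.indicator_apply]
    by_cases hω : ω ∈ ⋂ a ∈ blkT1 n i, (fun ω => A.u a.1 a.2.1 a.2.2 ω) ⁻¹' Set.Iio (p0 a.2.2)
    · rw [if_pos hω]
      show F1 i p0 (B1 ω) = 1
      rw [F1, if_pos]
      intro k j hj
      have hm : ((k, 0, j) : Fin 2 × ℕ × Fin n) ∈ blkT1 n i := (mem_blkT1 _).mpr ⟨rfl, hj⟩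
      have hmem := Set.mem_iInter₂.mp hω (k, 0, j) hm
      rw [tbit, dif_pos hm]
      exact decide_eq_true hmem
    · rw [if_neg hω]
      show F1 i p0 (B1 ω) = 0
      rw [F1, if_neg]
      intro H
      apply hω
      rw [Set.mem_iInter₂]
      rintro ⟨k, tt, j⟩ hm
      obtain ⟨h0, hj⟩ := (mem_blkT1 _).mp hm
      dsimp only at h0 hj
      subst h0
      have hh := H k j hj
      rw [tbit, dif_pos hm] at hh
      exact of_decide_eq_true hh
  have hPE : A.P (⋂ a ∈ blkT1 n i, (fun ω => A.u a.1 a.2.1 a.2.2 ω) ⁻¹' Set.Iio (p0 a.2.2))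
      = ∏ a ∈ blkT1 n i, ENNReal.ofReal (p0 a.2.2) := by
    have h1 : A.P (⋂ a ∈ blkT1 n i, (fun ω => A.u a.1 a.2.1 a.2.2 ω) ⁻¹' Set.Iio (p0 a.2.2))
        = ∏ a ∈ blkT1 n i,
          A.P ((fun ω => A.u a.1 a.2.1 a.2.2 ω) ⁻¹' Set.Iio (p0 a.2.2)) := by
      exact A.uIndep.measure_inter_preimage_eq_mul (blkT1 n i)
        (sets := fun a => Set.Iio (p0 a.2.2)) (fun a _ => measurableSet_Iio)
    rw [h1]
    exact Finset.prod_congr rfl (fun a _ => hprob a.1 a.2.1 a.2.2)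
  have hprodT1 : ∏ a ∈ blkT1 n i, ENNReal.ofReal (p0 a.2.2)
      = ENNReal.ofReal ((∏ j ∈ Finset.univ.filter (fun j : Fin n => (j : ℕ) < i), p0 j) ^ 2) := by
    rw [blkT1, Finset.prod_product]
    simp only [Finset.prod_product, Finset.prod_singleton]
    rw [Finset.prod_const, Finset.card_univ, Fintype.card_fin,
      ← ENNReal.ofReal_prod_of_nonneg (fun j _ => (hp01 j).1),
      ← ENNReal.ofReal_pow (Finset.prod_nonneg (fun j _ => (hp01 j).1))]
  have hIntF1 : MeasureTheory.Integrable (fun ω => F1 i p0 (B1 ω)) A.P := by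
    rw [hF1pt]
    exact (MeasureTheory.integrable_const 1).indicator hEmeas
  have hX1 : ∫ ω, F1 i p0 (B1 ω) ∂A.P
      = ∏ j ∈ Finset.univ.filter (fun j : Fin n => (j : ℕ) < i), (p0 j) ^ 2 := by
    rw [hF1pt, MeasureTheory.integral_indicator_const _ hEmeas, MeasureTheory.measureReal_def, hPE, hprodT1]
    rw [ENNReal.toReal_ofReal (by positivity)]
    rw [← Finset.prod_pow]
    simp
  -- independence of the two blocks
  have hdisj : Disjoint (blkT1 n i) (blkT2 I) := by
    rw [Finset.disjoint_left]
    intro a h1 h2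
    have hj := ((mem_blkT1 a).mp h1).2
    simp only [blkT2, Finset.mem_insert, Finset.mem_singleton] at h2
    rcases h2 with h | h <;> rw [h] at hj <;> exact lt_irrefl _ hj
  have hIndep : ProbabilityTheory.IndepFun B1 B2 A.P := by
    have := A.uIndep.indepFun_finset (blkT1 n i) (blkT2 I) hdisj (fun a => A.uMeas _ _ _)
    exact this
  have hI1 : ProbabilityTheory.IndepFun (fun ω => F1 i p0 (B1 ω))
      (fun ω => G1 I (p0 I) (B2 ω)) A.P :=
    hIndep.comp (measurable_F1 i p0) (measurable_G1 I (p0 I))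
  have hI2 : ProbabilityTheory.IndepFun (fun ω => F2 i p0 (B1 ω))
      (fun ω => G2 I (p0 I) (B2 ω)) A.P :=
    hIndep.comp (measurable_F2 i p0) (measurable_G2 I (p0 I))
  have hmul1 : ∫ ω, F1 i p0 (B1 ω) * G1 I (p0 I) (B2 ω) ∂A.P
      = (∫ ω, F1 i p0 (B1 ω) ∂A.P) * ∫ ω, G1 I (p0 I) (B2 ω) ∂A.P := by
    exact hI1.integral_fun_mul_eq_mul_integral ((measurable_F1 i p0).comp hMB1).aestronglyMeasurable
      ((measurable_G1 I (p0 I)).comp hMB2).aestronglyMeasurable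
  have hmul2 : ∫ ω, F2 i p0 (B1 ω) * G2 I (p0 I) (B2 ω) ∂A.P
      = (∫ ω, F2 i p0 (B1 ω) ∂A.P) * ∫ ω, G2 I (p0 I) (B2 ω) ∂A.P := by
    exact hI2.integral_fun_mul_eq_mul_integral ((measurable_F2 i p0).comp hMB1).aestronglyMeasurable
      ((measurable_G2 I (p0 I)).comp hMB2).aestronglyMeasurable
  -- integrability of the two products
  have habsF1 : ∀ v, |F1 i p0 v| ≤ 1 := by
    intro v; rw [F1]; split_ifs <;> norm_num
  have habsF2 : ∀ v, |F2 i p0 v| ≤ 1 := by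
    intro v; rw [F2]; split_ifs <;> norm_num
  have habsG2 : ∀ v, |G2 I (p0 I) v| ≤ 1 := by
    intro v; rw [G2]; split_ifs <;> norm_num
  have habsG1 : ∀ v, |G1 I (p0 I) v| ≤ 1 := by
    intro v; rw [G1, abs_pow]
    calc |G2 I (p0 I) v| ^ 2 ≤ 1 ^ 2 := by
          apply pow_le_pow_left₀ (abs_nonneg _) (habsG2 v)
      _ = 1 := one_pow 2
  have hIntP1 : MeasureTheory.Integrable (fun ω => F1 i p0 (B1 ω) * G1 I (p0 I) (B2 ω)) A.P := by
    apply MeasureTheory.Integrable.mono' (MeasureTheory.integrable_const (1 : ℝ))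
    · exact (((measurable_F1 i p0).comp hMB1).mul
        ((measurable_G1 I (p0 I)).comp hMB2)).aestronglyMeasurable
    · apply MeasureTheory.ae_of_all
      intro ω
      rw [Real.norm_eq_abs, abs_mul]
      nlinarith [habsF1 (B1 ω), habsG1 (B2 ω), abs_nonneg (F1 i p0 (B1 ω)),
        abs_nonneg (G1 I (p0 I) (B2 ω))]
  have hIntP2 : MeasureTheory.Integrable (fun ω => F2 i p0 (B1 ω) * G2 I (p0 I) (B2 ω)) A.P := by
    apply MeasureTheory.Integrable.mono' (MeasureTheory.integrable_const (1 : ℝ))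
    · exact (((measurable_F2 i p0).comp hMB1).mul
        ((measurable_G2 I (p0 I)).comp hMB2)).aestronglyMeasurable
    · apply MeasureTheory.ae_of_all
      intro ω
      rw [Real.norm_eq_abs, abs_mul]
      nlinarith [habsF2 (B1 ω), habsG2 (B2 ω), abs_nonneg (F2 i p0 (B1 ω)),
        abs_nonneg (G2 I (p0 I) (B2 ω))]
  -- putting everything together
  have key : (∫ ω, (A.p 1 ω I - A.p 0 ω I) ∂A.P)
      = (2 / μ) * (∏ j ∈ Finset.univ.filter (fun j : Fin n => (j : ℕ) < i), (p0 j) ^ 2)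
        * p0 I * (1 - p0 I) := by
    calc (∫ ω, (A.p 1 ω I - A.p 0 ω I) ∂A.P)
        = ∫ ω, (1 / μ) * (F1 i p0 (B1 ω) * G1 I (p0 I) (B2 ω) +
            F2 i p0 (B1 ω) * G2 I (p0 I) (B2 ω)) ∂A.P :=
          MeasureTheory.integral_congr_ae (MeasureTheory.ae_of_all _ hgoal)
      _ = (1 / μ) * ∫ ω, (F1 i p0 (B1 ω) * G1 I (p0 I) (B2 ω) +
            F2 i p0 (B1 ω) * G2 I (p0 I) (B2 ω)) ∂A.P :=
          MeasureTheory.integral_const_mul _ _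
      _ = (1 / μ) * ((∫ ω, F1 i p0 (B1 ω) * G1 I (p0 I) (B2 ω) ∂A.P) +
            ∫ ω, F2 i p0 (B1 ω) * G2 I (p0 I) (B2 ω) ∂A.P) := by
          rw [MeasureTheory.integral_add hIntP1 hIntP2]
      _ = (1 / μ) * ((∏ j ∈ Finset.univ.filter (fun j : Fin n => (j : ℕ) < i), (p0 j) ^ 2) *
            (p0 I + p0 I - 2 * (p0 I * p0 I)) +
            (∫ ω, F2 i p0 (B1 ω) ∂A.P) * 0) := by
          rw [hmul1, hmul2, hX1, hY1, hY2]
      _ = (2 / μ) * (∏ j ∈ Finset.univ.filter (fun j : Fin n => (j : ℕ) < i), (p0 j) ^ 2)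
            * p0 I * (1 - p0 I) := by ring
  exact key
end

section
/- Consider one iteration of the cGA with well-behaved hypothetical population size μ > 0 maximizing LeadingOnes on bit strings of length n, started from a frequency vector p with 1/n + 1/μ ≤ p_i ≤ 1 − 1/n − 1/μ for some i ∈ [2 .. n] (so no border capping occurs at position i). Then conditioned on the event that the two samples x^(1), x^(2) differ at position i, the expected change of the frequency at position i equals (1/μ) · ∏_{j=1}^{i−1} p_j^2. -/
/-- ℕ-valued version of the LeadingOnes fitness. -/
def loCard {n : ℕ} (b : Fin n → Bool) : ℕ :=
  (((Finset.univ : Finset (Fin n)).filter (fun k => ∀ j ≤ k, b j = true)).card)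

lemma leadingOnes_eq_loCard {n : ℕ} (b : Fin n → Bool) :
    leadingOnes b = (loCard b : ℝ) := rfl

/-- Truncation of a bit string to its first `i-1` bits. -/
def extb {n : ℕ} (i : ℕ) (b : Fin n → Bool) : Fin n → Bool :=
  fun j => if (j : ℕ) < i - 1 then b j else false

lemma card_filter_coe_lt {n m : ℕ} (h : m ≤ n) :
    (((Finset.univ : Finset (Fin n)).filter (fun j : Fin n => (j : ℕ) < m)).card) = m := by
  classical
  have : ((Finset.univ : Finset (Fin n)).filter (fun j : Fin n => (j : ℕ) < m))
      = (Finset.univ : Finset (Fin m)).map ⟨Fin.castLE h, Fin.castLE_injective h⟩ := by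
    ext j
    simp only [Finset.mem_filter, Finset.mem_univ, true_and, Finset.mem_map,
      Function.Embedding.coeFn_mk]
    constructor
    · intro hj; exact ⟨⟨(j : ℕ), hj⟩, by ext; rfl⟩
    · rintro ⟨a, rfl⟩; exact a.2
  rw [this, Finset.card_map, Finset.card_univ, Fintype.card_fin]

section Det

variable {n i : ℕ} {b : Fin n → Bool}

lemma lo_ge_of_pref (hi2 : 2 ≤ i) (hin : i ≤ n)
    (h : ∀ j : Fin n, (j : ℕ) < i - 1 → b j = true) : i - 1 ≤ loCard b := by
  classical
  have hsub : ((Finset.univ : Finset (Fin n)).filter (fun j : Fin n => (j : ℕ) < i - 1))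
      ⊆ ((Finset.univ : Finset (Fin n)).filter (fun k => ∀ j ≤ k, b j = true)) := by
    intro j hj
    simp only [Finset.mem_filter, Finset.mem_univ, true_and] at hj ⊢
    intro j' hj'
    exact h j' (lt_of_le_of_lt (by exact_mod_cast hj') hj)
  have := Finset.card_le_card hsub
  rwa [card_filter_coe_lt (by omega)] at this

lemma lo_ge_of_pref_one (hi2 : 2 ≤ i) (hin : i ≤ n)
    (h : ∀ j : Fin n, (j : ℕ) < i - 1 → b j = true)
    (hb : b ⟨i - 1, by have := h; omega⟩ = true) : i ≤ loCard b := by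
  classical
  have hsub : ((Finset.univ : Finset (Fin n)).filter (fun j : Fin n => (j : ℕ) < i))
      ⊆ ((Finset.univ : Finset (Fin n)).filter (fun k => ∀ j ≤ k, b j = true)) := by
    intro j hj
    simp only [Finset.mem_filter, Finset.mem_univ, true_and] at hj ⊢
    intro j' hj'
    have hj'n : (j' : ℕ) < i := lt_of_le_of_lt (by exact_mod_cast hj') hj
    rcases lt_or_ge ((j' : ℕ)) (i - 1) with h1 | h1
    · exact h j' h1
    · have : j' = (⟨i - 1, by omega⟩ : Fin n) := by
        ext; simp; omega
      rw [this]; exact hb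
  have := Finset.card_le_card hsub
  rwa [card_filter_coe_lt (by omega)] at this

lemma lo_eq_of_pref_zero (hi2 : 2 ≤ i) (hin : i ≤ n)
    (h : ∀ j : Fin n, (j : ℕ) < i - 1 → b j = true)
    (hb : b ⟨i - 1, by have := h; omega⟩ = false) : loCard b = i - 1 := by
  classical
  have heq : ((Finset.univ : Finset (Fin n)).filter (fun k => ∀ j ≤ k, b j = true))
      = ((Finset.univ : Finset (Fin n)).filter (fun j : Fin n => (j : ℕ) < i - 1)) := by
    ext j
    simp only [Finset.mem_filter, Finset.mem_univ, true_and]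
    constructor
    · intro hj
      by_contra hcon
      have : (⟨i - 1, by omega⟩ : Fin n) ≤ j := by
        rw [Fin.le_def]; simpa using le_of_not_gt hcon
      have := hj _ this
      rw [hb] at this; exact Bool.false_ne_true this
    · intro hj j' hj'
      exact h j' (lt_of_le_of_lt (by exact_mod_cast hj') hj)
  rw [loCard, heq, card_filter_coe_lt (by omega)]

lemma lo_lt_of_not_pref (hi2 : 2 ≤ i) (hin : i ≤ n)
    (h : ¬ ∀ j : Fin n, (j : ℕ) < i - 1 → b j = true) : loCard b < i - 1 := by
  classical
  push_neg at h
  obtain ⟨j0, hj0, hbj0⟩ := h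
  have hbj0' : b j0 = false := by
    cases hb : b j0
    · rfl
    · exact absurd hb hbj0
  have hsub : ((Finset.univ : Finset (Fin n)).filter (fun k => ∀ j ≤ k, b j = true))
      ⊆ ((Finset.univ : Finset (Fin n)).filter (fun j : Fin n => (j : ℕ) < (j0 : ℕ))) := by
    intro j hj
    simp only [Finset.mem_filter, Finset.mem_univ, true_and] at hj ⊢
    by_contra hcon
    have : j0 ≤ j := by rw [Fin.le_def]; exact le_of_not_gt hcon
    have := hj _ this
    rw [hbj0'] at this; exact Bool.false_ne_true this
  have := Finset.card_le_card hsub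
  rw [card_filter_coe_lt (le_of_lt j0.2)] at this
  exact lt_of_le_of_lt this hj0

lemma lo_extb_eq_of_not_pref (hi2 : 2 ≤ i) (hin : i ≤ n)
    (h : ¬ ∀ j : Fin n, (j : ℕ) < i - 1 → b j = true) :
    loCard (extb i b) = loCard b := by
  classical
  push_neg at h
  obtain ⟨j0, hj0, hbj0⟩ := h
  have hbj0' : b j0 = false := by
    cases hb : b j0
    · rfl
    · exact absurd hb hbj0
  have hext0 : extb i b j0 = false := by simp [extb, hj0, hbj0']
  have key : ∀ (c : Fin n → Bool), c j0 = false →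
      ∀ j : Fin n, (∀ j' ≤ j, c j' = true) → (j : ℕ) < (j0 : ℕ) := by
    intro c hc j hj
    by_contra hcon
    have : j0 ≤ j := by rw [Fin.le_def]; exact le_of_not_gt hcon
    have := hj _ this
    rw [hc] at this; exact Bool.false_ne_true this
  have heq : ((Finset.univ : Finset (Fin n)).filter (fun k => ∀ j ≤ k, extb i b j = true))
      = ((Finset.univ : Finset (Fin n)).filter (fun k => ∀ j ≤ k, b j = true)) := by
    ext j
    simp only [Finset.mem_filter, Finset.mem_univ, true_and]
    constructor
    · intro hj j' hj'
      have hjlt := key _ hext0 j hj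
      have : (j' : ℕ) < i - 1 := by
        have : (j' : ℕ) ≤ (j : ℕ) := by exact_mod_cast hj'
        omega
      have := hj j' hj'
      rwa [extb, if_pos ‹(j' : ℕ) < i - 1›] at this
    · intro hj j' hj'
      have hjlt := key _ hbj0' j hj
      have : (j' : ℕ) < i - 1 := by
        have : (j' : ℕ) ≤ (j : ℕ) := by exact_mod_cast hj'
        omega
      rw [extb, if_pos this]
      exact hj j' hj'
  rw [loCard, heq]; rfl

lemma pref_extb (hi2 : 2 ≤ i) (hin : i ≤ n)
    (h : ∀ j : Fin n, (j : ℕ) < i - 1 → b j = true) :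
    loCard (extb i b) = i - 1 := by
  refine lo_eq_of_pref_zero hi2 hin ?_ ?_
  · intro j hj; rw [extb, if_pos hj]; exact h j hj
  · rw [extb]; simp

end Det

lemma cmp_not_pref {n i : ℕ} (hi2 : 2 ≤ i) (hin : i ≤ n) {b0 b1 : Fin n → Bool}
    (h : ¬((∀ j : Fin n, (j : ℕ) < i - 1 → b0 j = true) ∧
           (∀ j : Fin n, (j : ℕ) < i - 1 → b1 j = true))) :
    (loCard b1 ≤ loCard b0 ↔ loCard (extb i b1) ≤ loCard (extb i b0)) := by
  by_cases h0 : ∀ j : Fin n, (j : ℕ) < i - 1 → b0 j = true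
  · have h1 : ¬ ∀ j : Fin n, (j : ℕ) < i - 1 → b1 j = true := fun h1 => h ⟨h0, h1⟩
    have e1 := lo_extb_eq_of_not_pref hi2 hin h1
    have l1 := lo_lt_of_not_pref hi2 hin h1
    have l0 := lo_ge_of_pref hi2 hin h0
    have e0 := pref_extb hi2 hin h0
    constructor <;> intro <;> omega
  · by_cases h1 : ∀ j : Fin n, (j : ℕ) < i - 1 → b1 j = true
    · have e0 := lo_extb_eq_of_not_pref hi2 hin h0
      have l0 := lo_lt_of_not_pref hi2 hin h0
      have l1 := lo_ge_of_pref hi2 hin h1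
      have e1 := pref_extb hi2 hin h1
      constructor <;> intro <;> omega
    · rw [lo_extb_eq_of_not_pref hi2 hin h0, lo_extb_eq_of_not_pref hi2 hin h1]

lemma measurable_decide_lt (c : ℝ) : Measurable (fun r : ℝ => decide (r < c)) := by
  apply measurable_to_countable'
  intro y
  cases y
  · convert measurableSet_Ici (a := c) using 1
    ext r
    simp [Set.mem_preimage, decide_eq_false_iff_not, not_lt]
  · convert measurableSet_Iio (a := c) using 1
    ext r
    simp [Set.mem_preimage]

/-- conditional expected change given differing samples.
Consider one iteration of the cGA on LeadingOnes started from a frequency vector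
`p0` with `1/n + 1/μ ≤ p0_i ≤ 1 - 1/n - 1/μ` at the (1-indexed) position
`i ∈ [2..n]` (so no border capping occurs there).  Conditioned on the event `D`
that the two samples differ at position `i`, the expected change of the `i`-th
frequency equals `(1/μ) ⬝ ∏_{j=1}^{i-1} p0_j²`; equivalently, the integral of the
change over `D` equals `(1/μ) ⬝ (∏_{j=1}^{i-1} p0_j²) ⬝ Pr[D]`. -/
theorem cga_leadingOnes_conditional_expected_change
    (n : ℕ) (μ : ℝ) (hwb : WellBehaved n μ)
    (p0 : Fin n → ℝ) (hbox : ∀ j : Fin n, 1 / (n : ℝ) ≤ p0 j ∧ p0 j ≤ 1 - 1 / n)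
    (i : ℕ) (hi2 : 2 ≤ i) (hin : i ≤ n)
    (hlow : 1 / (n : ℝ) + 1 / μ ≤ p0 ⟨i - 1, by omega⟩)
    (hhigh : p0 ⟨i - 1, by omega⟩ ≤ 1 - 1 / (n : ℝ) - 1 / μ)
    (A : CGA n μ leadingOnes p0)
    (D : Set A.Omega)
    (hD : D = {ω | A.x 0 0 ω ⟨i - 1, by omega⟩ ≠ A.x 1 0 ω ⟨i - 1, by omega⟩}) :
    (∫ ω in D, (A.p 1 ω ⟨i - 1, by omega⟩ - A.p 0 ω ⟨i - 1, by omega⟩) ∂A.P) =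
      (1 / μ) *
        (∏ j ∈ Finset.univ.filter (fun j : Fin n => (j : ℕ) < i - 1), (p0 j) ^ 2)
        * (A.P D).toReal := by
  classical
  obtain ⟨hμpos, -⟩ := hwb
  haveI : MeasureTheory.IsProbabilityMeasure A.P := A.isProb
  letI : MeasurableSpace A.Omega := A.measSpace
  have hn2 : 2 ≤ n := le_trans hi2 hin
  set ι : Fin n := ⟨i - 1, by omega⟩ with hι
  -- the Boolean bit random variables
  set X : (Fin 2 × ℕ × Fin n) → A.Omega → Bool :=
    fun s ω => decide (A.u s.1 s.2.1 s.2.2 ω < p0 s.2.2) with hXdef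
  have hXmeas : ∀ s, Measurable (X s) :=
    fun s => (measurable_decide_lt (p0 s.2.2)).comp (A.uMeas s.1 s.2.1 s.2.2)
  have hXindep : ProbabilityTheory.iIndepFun (m := fun _ => inferInstance) X A.P :=
    A.uIndep.comp (fun s => fun r : ℝ => decide (r < p0 s.2.2))
      (fun s => measurable_decide_lt _)
  have hxX : ∀ (k : Fin 2) (j : Fin n) ω, A.x k 0 ω j = X (k, 0, j) ω := by
    intro k j ω
    rw [A.hx, A.hp0]
  -- bounds on p0
  have hp0nonneg : ∀ j : Fin n, (0 : ℝ) ≤ p0 j := by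
    intro j
    refine le_trans ?_ (hbox j).1
    positivity
  have hp0le1 : ∀ j : Fin n, p0 j ≤ 1 := by
    intro j
    refine le_trans (hbox j).2 ?_
    have : (0:ℝ) ≤ 1 / (n:ℝ) := by positivity
    linarith
  -- marginal probabilities of the bits
  have hbit_true : ∀ (s : Fin 2 × ℕ × Fin n),
      A.P (X s ⁻¹' {true}) = ENNReal.ofReal (p0 s.2.2) := by
    intro s
    have hpre : X s ⁻¹' {true} = A.u s.1 s.2.1 s.2.2 ⁻¹' (Set.Iio (p0 s.2.2)) := by
      ext ω
      simp [hXdef, Set.mem_preimage]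
    rw [hpre, ← MeasureTheory.Measure.map_apply (A.uMeas _ _ _) measurableSet_Iio, A.uUnif,
      MeasureTheory.Measure.restrict_apply measurableSet_Iio]
    have hset : Set.Iio (p0 s.2.2) ∩ Set.Icc (0:ℝ) 1 = Set.Ico 0 (p0 s.2.2) := by
      ext r
      simp only [Set.mem_inter_iff, Set.mem_Iio, Set.mem_Icc, Set.mem_Ico]
      constructor
      · rintro ⟨h1, h2, h3⟩; exact ⟨h2, h1⟩
      · rintro ⟨h1, h2⟩; exact ⟨h2, h1, le_trans (le_of_lt h2) (hp0le1 _)⟩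
    rw [hset, Real.volume_Ico, sub_zero]
  have hbit_false : ∀ (s : Fin 2 × ℕ × Fin n),
      A.P (X s ⁻¹' {false}) = ENNReal.ofReal (1 - p0 s.2.2) := by
    intro s
    have hpre : X s ⁻¹' {false} = A.u s.1 s.2.1 s.2.2 ⁻¹' (Set.Ici (p0 s.2.2)) := by
      ext ω
      simp [hXdef, Set.mem_preimage, not_lt]
    rw [hpre, ← MeasureTheory.Measure.map_apply (A.uMeas _ _ _) measurableSet_Ici, A.uUnif,
      MeasureTheory.Measure.restrict_apply measurableSet_Ici]
    have hset : Set.Ici (p0 s.2.2) ∩ Set.Icc (0:ℝ) 1 = Set.Icc (p0 s.2.2) 1 := by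
      ext r
      simp only [Set.mem_inter_iff, Set.mem_Ici, Set.mem_Icc]
      constructor
      · rintro ⟨h1, h2, h3⟩; exact ⟨h1, h3⟩
      · rintro ⟨h1, h2⟩; exact ⟨h1, le_trans (hp0nonneg _) h1, h2⟩
    rw [hset, Real.volume_Icc]
  -- index sets
  set S : Finset (Fin 2 × ℕ × Fin n) :=
    (Finset.univ : Finset (Fin 2)) ×ˢ (({0} : Finset ℕ) ×ˢ
      (Finset.univ.filter (fun j : Fin n => (j : ℕ) < i - 1))) with hSdef
  set T : Finset (Fin 2 × ℕ × Fin n) :=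
    (Finset.univ : Finset (Fin 2)) ×ˢ (({0} : Finset ℕ) ×ˢ ({ι} : Finset (Fin n))) with hTdef
  have hmemS : ∀ (k : Fin 2) (j : Fin n), (j : ℕ) < i - 1 →
      ((k, (0 : ℕ), j) : Fin 2 × ℕ × Fin n) ∈ S := by
    intro k j hj
    simp [hSdef, hj]
  have hmemSiff : ∀ s : Fin 2 × ℕ × Fin n, s ∈ S ↔ s.2.1 = 0 ∧ (s.2.2 : ℕ) < i - 1 := by
    rintro ⟨k, t, j⟩
    simp only [hSdef, Finset.mem_product, Finset.mem_univ, Finset.mem_singleton,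
      Finset.mem_filter, true_and]
  have hmemT : ∀ k : Fin 2, ((k, (0 : ℕ), ι) : Fin 2 × ℕ × Fin n) ∈ T := by
    intro k
    simp [hTdef]
  have hST : Disjoint S T := by
    rw [Finset.disjoint_left]
    intro s hs ht
    rw [hmemSiff] at hs
    simp only [hTdef, Finset.mem_product, Finset.mem_singleton] at ht
    have : (s.2.2 : ℕ) = i - 1 := by rw [ht.2.2]
    omega
  set ΦS : A.Omega → (S → Bool) := fun ω s => X s ω with hΦSdef
  set ΦT : A.Omega → (T → Bool) := fun ω s => X s ω with hΦTdef
  have hΦSmeas : Measurable ΦS := measurable_pi_lambda _ (fun s => hXmeas s)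
  have hΦTmeas : Measurable ΦT := measurable_pi_lambda _ (fun s => hXmeas s)
  have hIndep : ProbabilityTheory.IndepFun ΦS ΦT A.P :=
    hXindep.indepFun_finset S T hST hXmeas
  have hmS : ∀ st : Set (S → Bool), MeasurableSet st := fun st => st.toFinite.measurableSet
  have hmT : ∀ st : Set (T → Bool), MeasurableSet st := fun st => st.toFinite.measurableSet
  -- events on the S-side
  set bitsOf : (S → Bool) → Fin 2 → Fin n → Bool :=
    fun v k j => if hj : (j : ℕ) < i - 1 then v ⟨(k, 0, j), hmemS k j hj⟩ else false
    with hbitsdef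
  set setE : Set (S → Bool) :=
    {v | ∀ k : Fin 2, ∀ j : Fin n, (j : ℕ) < i - 1 → bitsOf v k j = true} with hsetEdef
  set setFp : Set (S → Bool) :=
    setEᶜ ∩ {v | loCard (bitsOf v 1) ≤ loCard (bitsOf v 0)} with hsetFpdef
  set setFm : Set (S → Bool) :=
    setEᶜ ∩ {v | ¬ loCard (bitsOf v 1) ≤ loCard (bitsOf v 0)} with hsetFmdef
  -- events on the T-side
  set setB0 : Set (T → Bool) :=
    {w | w ⟨(0, 0, ι), hmemT 0⟩ = true ∧ w ⟨(1, 0, ι), hmemT 1⟩ = false} with hsetB0def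
  set setB1 : Set (T → Bool) :=
    {w | w ⟨(0, 0, ι), hmemT 0⟩ = false ∧ w ⟨(1, 0, ι), hmemT 1⟩ = true} with hsetB1def
  set setD : Set (T → Bool) :=
    {w | w ⟨(0, 0, ι), hmemT 0⟩ ≠ w ⟨(1, 0, ι), hmemT 1⟩} with hsetDdef
  set Ee : Set A.Omega := ΦS ⁻¹' setE with hEedef
  set Fp : Set A.Omega := ΦS ⁻¹' setFp with hFpdef
  set Fm : Set A.Omega := ΦS ⁻¹' setFm with hFmdef
  set B0 : Set A.Omega := ΦT ⁻¹' setB0 with hB0def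
  set B1 : Set A.Omega := ΦT ⁻¹' setB1 with hB1def
  -- bridging
  have hbits : ∀ (ω : A.Omega) (k : Fin 2), bitsOf (ΦS ω) k = extb i (A.x k 0 ω) := by
    intro ω k
    funext j
    by_cases hj : (j : ℕ) < i - 1
    · rw [hbitsdef]
      simp only [dif_pos hj]
      rw [hΦSdef]
      rw [extb, if_pos hj, hxX]
    · rw [hbitsdef]
      simp only [dif_neg hj]
      rw [extb, if_neg hj]
  have hDpre : D = ΦT ⁻¹' setD := by
    rw [hD]
    ext ω
    simp only [Set.mem_setOf_eq, Set.mem_preimage, hsetDdef, hΦTdef]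
    rw [hxX, hxX]
  -- product rule for S-side and T-side events
  have hPmul : ∀ (sA : Set (S → Bool)) (sB : Set (T → Bool)),
      A.P (ΦS ⁻¹' sA ∩ ΦT ⁻¹' sB) = A.P (ΦS ⁻¹' sA) * A.P (ΦT ⁻¹' sB) :=
    fun sA sB => hIndep.measure_inter_preimage_eq_mul sA sB (hmS sA) (hmT sB)
  -- probabilities of B0 and B1
  have hs01 : ((0 : Fin 2), (0 : ℕ), ι) ≠ ((1 : Fin 2), (0 : ℕ), ι) := by
    simp [Prod.ext_iff]
  have hPB0 : A.P B0 = ENNReal.ofReal (p0 ι) * ENNReal.ofReal (1 - p0 ι) := by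
    have hset : B0 = X (0, 0, ι) ⁻¹' {true} ∩ X (1, 0, ι) ⁻¹' {false} := by
      rw [hB0def]
      ext ω
      simp only [Set.mem_preimage, Set.mem_inter_iff, Set.mem_singleton_iff, hsetB0def,
        Set.mem_setOf_eq, hΦTdef]
    rw [hset,
      (hXindep.indepFun hs01).measure_inter_preimage_eq_mul {true} {false}
        (Set.toFinite _).measurableSet (Set.toFinite _).measurableSet,
      hbit_true, hbit_false]
  have hPB1 : A.P B1 = ENNReal.ofReal (p0 ι) * ENNReal.ofReal (1 - p0 ι) := by
    have hset : B1 = X (0, 0, ι) ⁻¹' {false} ∩ X (1, 0, ι) ⁻¹' {true} := by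
      rw [hB1def]
      ext ω
      simp only [Set.mem_preimage, Set.mem_inter_iff, Set.mem_singleton_iff, hsetB1def,
        Set.mem_setOf_eq, hΦTdef]
    rw [hset,
      (hXindep.indepFun hs01).measure_inter_preimage_eq_mul {false} {true}
        (Set.toFinite _).measurableSet (Set.toFinite _).measurableSet,
      hbit_false, hbit_true, mul_comm]
  -- probability of Ee
  have hEinter : Ee = ⋂ s ∈ S, X s ⁻¹' {true} := by
    ext ω
    simp only [hEedef, Set.mem_preimage, hsetEdef, Set.mem_setOf_eq, Set.mem_iInter,
      Set.mem_singleton_iff]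
    constructor
    · rintro h ⟨k, t, j⟩ hs
      rw [hmemSiff] at hs
      obtain ⟨ht, hj⟩ := hs
      simp only at ht hj
      subst ht
      have := h k j hj
      rw [hbitsdef] at this
      simp only [dif_pos hj] at this
      exact this
    · intro h k j hj
      rw [hbitsdef]
      simp only [dif_pos hj]
      exact h _ (hmemS k j hj)
  have hPE : A.P Ee = ∏ s ∈ S, ENNReal.ofReal (p0 s.2.2) := by
    have hmul := hXindep.measure_inter_preimage_eq_mul S
      (sets := fun _ => ({true} : Set Bool)) (fun s _ => (Set.toFinite _).measurableSet)
    rw [hEinter, hmul]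
    exact Finset.prod_congr rfl (fun s _ => hbit_true s)
  have hPEtoReal : (A.P Ee).toReal
      = ∏ j ∈ Finset.univ.filter (fun j : Fin n => (j : ℕ) < i - 1), (p0 j) ^ 2 := by
    rw [hPE, hSdef]
    rw [Finset.prod_product]
    simp only [Finset.prod_product, Finset.prod_singleton]
    rw [Finset.prod_const]
    rw [Finset.card_univ, Fintype.card_fin]
    rw [ENNReal.toReal_pow, ENNReal.toReal_prod]
    rw [← Finset.prod_pow]
    exact Finset.prod_congr rfl (fun j _ => by rw [ENNReal.toReal_ofReal (hp0nonneg j)])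
  -- capping is inactive
  have hcap : ∀ v : ℝ, 1 / (n : ℝ) ≤ v → v ≤ 1 - 1 / (n : ℝ) → capFreq n v = v := by
    intro v h1 h2
    rw [capFreq, min_eq_right h2, max_eq_right h1]
  have hμinvpos : 0 < 1 / μ := by positivity
  have hcapUp : capFreq n (p0 ι + 1 / μ) = p0 ι + 1 / μ :=
    hcap _ (by linarith) (by linarith)
  have hcapDn : capFreq n (p0 ι - 1 / μ) = p0 ι - 1 / μ :=
    hcap _ (by linarith) (by linarith)
  -- membership characterizations
  have hmemEe : ∀ ω : A.Omega, ω ∈ Ee ↔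
      ((∀ j : Fin n, (j : ℕ) < i - 1 → A.x 0 0 ω j = true) ∧
       (∀ j : Fin n, (j : ℕ) < i - 1 → A.x 1 0 ω j = true)) := by
    intro ω
    rw [hEedef]
    simp only [Set.mem_preimage, hsetEdef, Set.mem_setOf_eq]
    constructor
    · intro h
      constructor <;> intro j hj
      · have := h 0 j hj
        rw [hbits ω 0] at this
        rwa [extb, if_pos hj] at this
      · have := h 1 j hj
        rw [hbits ω 1] at this
        rwa [extb, if_pos hj] at this
    · intro h k j hj
      rw [hbits ω k]
      rw [extb, if_pos hj]
      fin_cases k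
      · exact h.1 j hj
      · exact h.2 j hj
  have hmemFp : ∀ ω : A.Omega, ω ∈ Fp ↔
      (ω ∉ Ee ∧ loCard (extb i (A.x 1 0 ω)) ≤ loCard (extb i (A.x 0 0 ω))) := by
    intro ω
    rw [hFpdef]
    simp only [Set.mem_preimage, hsetFpdef, Set.mem_inter_iff, Set.mem_compl_iff,
      Set.mem_setOf_eq, hbits ω 0, hbits ω 1]
    rw [hEedef]
    simp only [Set.mem_preimage]
  have hmemFm : ∀ ω : A.Omega, ω ∈ Fm ↔
      (ω ∉ Ee ∧ ¬ loCard (extb i (A.x 1 0 ω)) ≤ loCard (extb i (A.x 0 0 ω))) := by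
    intro ω
    rw [hFmdef]
    simp only [Set.mem_preimage, hsetFmdef, Set.mem_inter_iff, Set.mem_compl_iff,
      Set.mem_setOf_eq, hbits ω 0, hbits ω 1]
    rw [hEedef]
    simp only [Set.mem_preimage]
  have hmemB0 : ∀ ω : A.Omega, ω ∈ B0 ↔ (A.x 0 0 ω ι = true ∧ A.x 1 0 ω ι = false) := by
    intro ω
    rw [hB0def]
    simp only [Set.mem_preimage, hsetB0def, Set.mem_setOf_eq, hΦTdef]
    rw [hxX 0 ι ω, hxX 1 ι ω]
  have hmemB1 : ∀ ω : A.Omega, ω ∈ B1 ↔ (A.x 0 0 ω ι = false ∧ A.x 1 0 ω ι = true) := by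
    intro ω
    rw [hB1def]
    simp only [Set.mem_preimage, hsetB1def, Set.mem_setOf_eq, hΦTdef]
    rw [hxX 0 ι ω, hxX 1 ι ω]
  have hmemD : ∀ ω : A.Omega, ω ∈ D ↔ A.x 0 0 ω ι ≠ A.x 1 0 ω ι := by
    intro ω
    rw [hD]
    simp only [Set.mem_setOf_eq]
  -- the pointwise identity
  have hkey : ∀ ω : A.Omega, D.indicator (fun ω => A.p 1 ω ι - A.p 0 ω ι) ω
      = (Ee ∩ D).indicator (fun _ => (1:ℝ) / μ) ω + (Fp ∩ B0).indicator (fun _ => (1:ℝ) / μ) ω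
        + (Fm ∩ B1).indicator (fun _ => (1:ℝ) / μ) ω - (Fp ∩ B1).indicator (fun _ => (1:ℝ) / μ) ω
        - (Fm ∩ B0).indicator (fun _ => (1:ℝ) / μ) ω := by
    intro ω
    by_cases hωD : ω ∈ D
    · rw [Set.indicator_of_mem hωD]
      have hd : A.x 0 0 ω ι ≠ A.x 1 0 ω ι := (hmemD ω).1 hωD
      have hB0B1 : ¬ (ω ∈ B0 ∧ ω ∈ B1) := by
        rintro ⟨h0, h1⟩
        have := ((hmemB0 ω).1 h0).1
        have := ((hmemB1 ω).1 h1).1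
        simp_all
      have hup : A.p 1 ω ι = capFreq n (A.p 0 ω ι + (1 / μ) *
          (if leadingOnes (A.x 0 0 ω) ≥ leadingOnes (A.x 1 0 ω)
            then ((A.x 0 0 ω ι).toNat : ℝ) - ((A.x 1 0 ω ι).toNat : ℝ)
            else ((A.x 1 0 ω ι).toNat : ℝ) - ((A.x 0 0 ω ι).toNat : ℝ))) := A.hupdate 0 ω ι
      rw [hup, A.hp0]
      by_cases hE : ω ∈ Ee
      · obtain ⟨h0, h1⟩ := (hmemEe ω).1 hE
        have hFp : ω ∉ Fp := fun h => ((hmemFp ω).1 h).1 hE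
        have hFm : ω ∉ Fm := fun h => ((hmemFm ω).1 h).1 hE
        cases hb0 : A.x 0 0 ω ι <;> cases hb1 : A.x 1 0 ω ι
        · rw [hb0, hb1] at hd; exact absurd rfl hd
        · -- x0 = false, x1 = true : second sample wins
          have hge : ¬ (leadingOnes (A.x 0 0 ω) ≥ leadingOnes (A.x 1 0 ω)) := by
            rw [leadingOnes_eq_loCard, leadingOnes_eq_loCard, ge_iff_le, Nat.cast_le, not_le]
            have l0 : loCard (A.x 0 0 ω) = i - 1 := lo_eq_of_pref_zero hi2 hin h0 hb0
            have l1 : i ≤ loCard (A.x 1 0 ω) := lo_ge_of_pref_one hi2 hin h1 hb1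
            omega
          rw [if_neg hge]
          simp only [Bool.toNat_true, Bool.toNat_false, Nat.cast_one, Nat.cast_zero]
          have t1 : (Ee ∩ D).indicator (fun _ => (1:ℝ)/μ) ω = 1/μ := Set.indicator_of_mem (Set.mem_inter hE hωD) _
          have t2 : (Fp ∩ B0).indicator (fun _ => (1:ℝ)/μ) ω = 0 := Set.indicator_of_notMem (fun h => hFp h.1) _
          have t3 : (Fm ∩ B1).indicator (fun _ => (1:ℝ)/μ) ω = 0 := Set.indicator_of_notMem (fun h => hFm h.1) _
          have t4 : (Fp ∩ B1).indicator (fun _ => (1:ℝ)/μ) ω = 0 := Set.indicator_of_notMem (fun h => hFp h.1) _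
          have t5 : (Fm ∩ B0).indicator (fun _ => (1:ℝ)/μ) ω = 0 := Set.indicator_of_notMem (fun h => hFm h.1) _
          rw [t1, t2, t3, t4, t5]
          rw [show p0 ι + 1 / μ * ((1 : ℝ) - 0) = p0 ι + 1 / μ from by ring, hcapUp]
          ring
        · -- x0 = true, x1 = false : first sample wins
          have hge : leadingOnes (A.x 0 0 ω) ≥ leadingOnes (A.x 1 0 ω) := by
            rw [leadingOnes_eq_loCard, leadingOnes_eq_loCard, ge_iff_le, Nat.cast_le]
            have l1 : loCard (A.x 1 0 ω) = i - 1 := lo_eq_of_pref_zero hi2 hin h1 hb1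
            have l0 : i ≤ loCard (A.x 0 0 ω) := lo_ge_of_pref_one hi2 hin h0 hb0
            omega
          rw [if_pos hge]
          simp only [Bool.toNat_true, Bool.toNat_false, Nat.cast_one, Nat.cast_zero]
          have t1 : (Ee ∩ D).indicator (fun _ => (1:ℝ)/μ) ω = 1/μ := Set.indicator_of_mem (Set.mem_inter hE hωD) _
          have t2 : (Fp ∩ B0).indicator (fun _ => (1:ℝ)/μ) ω = 0 := Set.indicator_of_notMem (fun h => hFp h.1) _
          have t3 : (Fm ∩ B1).indicator (fun _ => (1:ℝ)/μ) ω = 0 := Set.indicator_of_notMem (fun h => hFm h.1) _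
          have t4 : (Fp ∩ B1).indicator (fun _ => (1:ℝ)/μ) ω = 0 := Set.indicator_of_notMem (fun h => hFp h.1) _
          have t5 : (Fm ∩ B0).indicator (fun _ => (1:ℝ)/μ) ω = 0 := Set.indicator_of_notMem (fun h => hFm h.1) _
          rw [t1, t2, t3, t4, t5]
          rw [show p0 ι + 1 / μ * ((1 : ℝ) - 0) = p0 ι + 1 / μ from by ring, hcapUp]
          ring
        · rw [hb0, hb1] at hd; exact absurd rfl hd
      · have hnE : ¬ ((∀ j : Fin n, (j : ℕ) < i - 1 → A.x 0 0 ω j = true) ∧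
            (∀ j : Fin n, (j : ℕ) < i - 1 → A.x 1 0 ω j = true)) :=
          fun h => hE ((hmemEe ω).2 h)
        have hcmp : (leadingOnes (A.x 0 0 ω) ≥ leadingOnes (A.x 1 0 ω)) ↔
            loCard (extb i (A.x 1 0 ω)) ≤ loCard (extb i (A.x 0 0 ω)) := by
          rw [leadingOnes_eq_loCard, leadingOnes_eq_loCard, ge_iff_le, Nat.cast_le]
          exact cmp_not_pref hi2 hin hnE
        by_cases hc : loCard (extb i (A.x 1 0 ω)) ≤ loCard (extb i (A.x 0 0 ω))
        · have hFp : ω ∈ Fp := (hmemFp ω).2 ⟨hE, hc⟩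
          have hFm : ω ∉ Fm := fun h => ((hmemFm ω).1 h).2 hc
          rw [if_pos (hcmp.2 hc)]
          cases hb0 : A.x 0 0 ω ι <;> cases hb1 : A.x 1 0 ω ι
          · rw [hb0, hb1] at hd; exact absurd rfl hd
          · have hB1m : ω ∈ B1 := (hmemB1 ω).2 ⟨hb0, hb1⟩
            have hB0m : ω ∉ B0 := fun h => hB0B1 ⟨h, hB1m⟩
            simp only [Bool.toNat_true, Bool.toNat_false, Nat.cast_one, Nat.cast_zero]
            have t1 : (Ee ∩ D).indicator (fun _ => (1:ℝ)/μ) ω = 0 := Set.indicator_of_notMem (fun h => hE h.1) _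
            have t2 : (Fp ∩ B0).indicator (fun _ => (1:ℝ)/μ) ω = 0 := Set.indicator_of_notMem (fun h => hB0m h.2) _
            have t3 : (Fm ∩ B1).indicator (fun _ => (1:ℝ)/μ) ω = 0 := Set.indicator_of_notMem (fun h => hFm h.1) _
            have t4 : (Fp ∩ B1).indicator (fun _ => (1:ℝ)/μ) ω = 1/μ := Set.indicator_of_mem (Set.mem_inter hFp hB1m) _
            have t5 : (Fm ∩ B0).indicator (fun _ => (1:ℝ)/μ) ω = 0 := Set.indicator_of_notMem (fun h => hFm h.1) _
            rw [t1, t2, t3, t4, t5]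
            rw [show p0 ι + 1 / μ * ((0 : ℝ) - 1) = p0 ι - 1 / μ from by ring, hcapDn]
            ring
          · have hB0m : ω ∈ B0 := (hmemB0 ω).2 ⟨hb0, hb1⟩
            have hB1m : ω ∉ B1 := fun h => hB0B1 ⟨hB0m, h⟩
            simp only [Bool.toNat_true, Bool.toNat_false, Nat.cast_one, Nat.cast_zero]
            have t1 : (Ee ∩ D).indicator (fun _ => (1:ℝ)/μ) ω = 0 := Set.indicator_of_notMem (fun h => hE h.1) _
            have t2 : (Fp ∩ B0).indicator (fun _ => (1:ℝ)/μ) ω = 1/μ := Set.indicator_of_mem (Set.mem_inter hFp hB0m) _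
            have t3 : (Fm ∩ B1).indicator (fun _ => (1:ℝ)/μ) ω = 0 := Set.indicator_of_notMem (fun h => hFm h.1) _
            have t4 : (Fp ∩ B1).indicator (fun _ => (1:ℝ)/μ) ω = 0 := Set.indicator_of_notMem (fun h => hB1m h.2) _
            have t5 : (Fm ∩ B0).indicator (fun _ => (1:ℝ)/μ) ω = 0 := Set.indicator_of_notMem (fun h => hFm h.1) _
            rw [t1, t2, t3, t4, t5]
            rw [show p0 ι + 1 / μ * ((1 : ℝ) - 0) = p0 ι + 1 / μ from by ring, hcapUp]
            ring
          · rw [hb0, hb1] at hd; exact absurd rfl hd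
        · have hFm : ω ∈ Fm := (hmemFm ω).2 ⟨hE, hc⟩
          have hFp : ω ∉ Fp := fun h => hc ((hmemFp ω).1 h).2
          rw [if_neg (fun h => hc (hcmp.1 h))]
          cases hb0 : A.x 0 0 ω ι <;> cases hb1 : A.x 1 0 ω ι
          · rw [hb0, hb1] at hd; exact absurd rfl hd
          · have hB1m : ω ∈ B1 := (hmemB1 ω).2 ⟨hb0, hb1⟩
            have hB0m : ω ∉ B0 := fun h => hB0B1 ⟨h, hB1m⟩
            simp only [Bool.toNat_true, Bool.toNat_false, Nat.cast_one, Nat.cast_zero]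
            have t1 : (Ee ∩ D).indicator (fun _ => (1:ℝ)/μ) ω = 0 := Set.indicator_of_notMem (fun h => hE h.1) _
            have t2 : (Fp ∩ B0).indicator (fun _ => (1:ℝ)/μ) ω = 0 := Set.indicator_of_notMem (fun h => hB0m h.2) _
            have t3 : (Fm ∩ B1).indicator (fun _ => (1:ℝ)/μ) ω = 1/μ := Set.indicator_of_mem (Set.mem_inter hFm hB1m) _
            have t4 : (Fp ∩ B1).indicator (fun _ => (1:ℝ)/μ) ω = 0 := Set.indicator_of_notMem (fun h => hFp h.1) _
            have t5 : (Fm ∩ B0).indicator (fun _ => (1:ℝ)/μ) ω = 0 := Set.indicator_of_notMem (fun h => hB0m h.2) _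
            rw [t1, t2, t3, t4, t5]
            rw [show p0 ι + 1 / μ * ((1 : ℝ) - 0) = p0 ι + 1 / μ from by ring, hcapUp]
            ring
          · have hB0m : ω ∈ B0 := (hmemB0 ω).2 ⟨hb0, hb1⟩
            have hB1m : ω ∉ B1 := fun h => hB0B1 ⟨hB0m, h⟩
            simp only [Bool.toNat_true, Bool.toNat_false, Nat.cast_one, Nat.cast_zero]
            have t1 : (Ee ∩ D).indicator (fun _ => (1:ℝ)/μ) ω = 0 := Set.indicator_of_notMem (fun h => hE h.1) _
            have t2 : (Fp ∩ B0).indicator (fun _ => (1:ℝ)/μ) ω = 0 := Set.indicator_of_notMem (fun h => hFp h.1) _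
            have t3 : (Fm ∩ B1).indicator (fun _ => (1:ℝ)/μ) ω = 0 := Set.indicator_of_notMem (fun h => hB1m h.2) _
            have t4 : (Fp ∩ B1).indicator (fun _ => (1:ℝ)/μ) ω = 0 := Set.indicator_of_notMem (fun h => hFp h.1) _
            have t5 : (Fm ∩ B0).indicator (fun _ => (1:ℝ)/μ) ω = 1/μ := Set.indicator_of_mem (Set.mem_inter hFm hB0m) _
            rw [t1, t2, t3, t4, t5]
            rw [show p0 ι + 1 / μ * ((0 : ℝ) - 1) = p0 ι - 1 / μ from by ring, hcapDn]
            ring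
          · rw [hb0, hb1] at hd; exact absurd rfl hd
    · have hB0m : ω ∉ B0 := by
        intro h
        obtain ⟨h0, h1⟩ := (hmemB0 ω).1 h
        exact hωD ((hmemD ω).2 (by rw [h0, h1]; simp))
      have hB1m : ω ∉ B1 := by
        intro h
        obtain ⟨h0, h1⟩ := (hmemB1 ω).1 h
        exact hωD ((hmemD ω).2 (by rw [h0, h1]; simp))
      have t1 : (Ee ∩ D).indicator (fun _ => (1:ℝ)/μ) ω = 0 := Set.indicator_of_notMem (fun h => hωD h.2) _
      have t2 : (Fp ∩ B0).indicator (fun _ => (1:ℝ)/μ) ω = 0 := Set.indicator_of_notMem (fun h => hB0m h.2) _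
      have t3 : (Fm ∩ B1).indicator (fun _ => (1:ℝ)/μ) ω = 0 := Set.indicator_of_notMem (fun h => hB1m h.2) _
      have t4 : (Fp ∩ B1).indicator (fun _ => (1:ℝ)/μ) ω = 0 := Set.indicator_of_notMem (fun h => hB1m h.2) _
      have t5 : (Fm ∩ B0).indicator (fun _ => (1:ℝ)/μ) ω = 0 := Set.indicator_of_notMem (fun h => hB0m h.2) _
      rw [Set.indicator_of_notMem hωD, t1, t2, t3, t4, t5]
      ring
  -- measurability
  have hDmeas : MeasurableSet D := by
    rw [hDpre]; exact hΦTmeas (hmT setD)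
  have hEmeas : MeasurableSet Ee := hΦSmeas (hmS setE)
  have hFpmeas : MeasurableSet Fp := hΦSmeas (hmS setFp)
  have hFmmeas : MeasurableSet Fm := hΦSmeas (hmS setFm)
  have hB0meas : MeasurableSet B0 := hΦTmeas (hmT setB0)
  have hB1meas : MeasurableSet B1 := hΦTmeas (hmT setB1)
  have hint : ∀ (s : Set A.Omega), MeasurableSet s →
      MeasureTheory.Integrable (s.indicator (fun _ => (1:ℝ)/μ)) A.P :=
    fun s hs => (MeasureTheory.integrable_const _).indicator hs
  have i1 := hint _ (hEmeas.inter hDmeas)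
  have i2 := hint _ (hFpmeas.inter hB0meas)
  have i3 := hint _ (hFmmeas.inter hB1meas)
  have i4 := hint _ (hFpmeas.inter hB1meas)
  have i5 := hint _ (hFmmeas.inter hB0meas)
  -- measures of the intersection events
  have hPED : A.P (Ee ∩ D) = A.P Ee * A.P D := by
    rw [hEedef, hDpre]; exact hPmul setE setD
  have hPFpB0 : A.P (Fp ∩ B0) = A.P Fp * A.P B0 := by
    rw [hFpdef, hB0def]; exact hPmul _ _
  have hPFpB1 : A.P (Fp ∩ B1) = A.P Fp * A.P B1 := by
    rw [hFpdef, hB1def]; exact hPmul _ _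
  have hPFmB0 : A.P (Fm ∩ B0) = A.P Fm * A.P B0 := by
    rw [hFmdef, hB0def]; exact hPmul _ _
  have hPFmB1 : A.P (Fm ∩ B1) = A.P Fm * A.P B1 := by
    rw [hFmdef, hB1def]; exact hPmul _ _
  have j2 : MeasureTheory.Integrable (fun ω => (Ee ∩ D).indicator (fun _ => (1:ℝ) / μ) ω + (Fp ∩ B0).indicator (fun _ => (1:ℝ) / μ) ω) A.P := i1.add i2
  have j3 : MeasureTheory.Integrable (fun ω => (Ee ∩ D).indicator (fun _ => (1:ℝ) / μ) ω + (Fp ∩ B0).indicator (fun _ => (1:ℝ) / μ) ω + (Fm ∩ B1).indicator (fun _ => (1:ℝ) / μ) ω) A.P := j2.add i3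
  have j4 : MeasureTheory.Integrable (fun ω => (Ee ∩ D).indicator (fun _ => (1:ℝ) / μ) ω + (Fp ∩ B0).indicator (fun _ => (1:ℝ) / μ) ω + (Fm ∩ B1).indicator (fun _ => (1:ℝ) / μ) ω - (Fp ∩ B1).indicator (fun _ => (1:ℝ) / μ) ω) A.P := j3.sub i4
  calc (∫ ω in D, (A.p 1 ω ι - A.p 0 ω ι) ∂A.P)
      = ∫ ω, D.indicator (fun ω => A.p 1 ω ι - A.p 0 ω ι) ω ∂A.P :=
        (MeasureTheory.integral_indicator hDmeas).symm
    _ = ∫ ω, ((Ee ∩ D).indicator (fun _ => (1:ℝ) / μ) ω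
          + (Fp ∩ B0).indicator (fun _ => (1:ℝ) / μ) ω
          + (Fm ∩ B1).indicator (fun _ => (1:ℝ) / μ) ω
          - (Fp ∩ B1).indicator (fun _ => (1:ℝ) / μ) ω
          - (Fm ∩ B0).indicator (fun _ => (1:ℝ) / μ) ω) ∂A.P := by
        congr 1
        funext ω
        exact hkey ω
    _ = (A.P (Ee ∩ D)).toReal • ((1:ℝ)/μ) + (A.P (Fp ∩ B0)).toReal • ((1:ℝ)/μ)
          + (A.P (Fm ∩ B1)).toReal • ((1:ℝ)/μ) - (A.P (Fp ∩ B1)).toReal • ((1:ℝ)/μ)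
          - (A.P (Fm ∩ B0)).toReal • ((1:ℝ)/μ) := by
        rw [MeasureTheory.integral_sub j4 i5,
          MeasureTheory.integral_sub j3 i4,
          MeasureTheory.integral_add j2 i3,
          MeasureTheory.integral_add i1 i2,
          MeasureTheory.integral_indicator_const _ (hEmeas.inter hDmeas),
          MeasureTheory.integral_indicator_const _ (hFpmeas.inter hB0meas),
          MeasureTheory.integral_indicator_const _ (hFmmeas.inter hB1meas),
          MeasureTheory.integral_indicator_const _ (hFpmeas.inter hB1meas),
          MeasureTheory.integral_indicator_const _ (hFmmeas.inter hB0meas)]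
        simp only [MeasureTheory.measureReal_def]
    _ = (1 / μ) *
          (∏ j ∈ Finset.univ.filter (fun j : Fin n => (j : ℕ) < i - 1), (p0 j) ^ 2)
          * (A.P D).toReal := by
        rw [hPED, hPFpB0, hPFpB1, hPFmB0, hPFmB1, hPB0, hPB1]
        rw [ENNReal.toReal_mul, ENNReal.toReal_mul, ENNReal.toReal_mul,
          ENNReal.toReal_mul, ENNReal.toReal_mul]
        rw [hPEtoReal]
        simp only [smul_eq_mul]
        ring
end
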